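/- arXiv:2503.00261 — 5 statements merged into one kernel-verified Lean document; each statement's English description precedes it below -/
import Mathlib

section
/- Let d ≥ 1, 0 < α < d, and let ρ be a critical radius function on ℝ^d. Let p_t(x,y) be a measurable kernel on (0,∞)×ℝ^d×ℝ^d such that for every N > 0 there exist constants c, C > 0 with |p_t(x,y)| ≤ C t^{−d/2} e^{−|x−y|²/(ct)} (1 + √t/ρ(x) + √t/ρ(y))^{−N} for all x, y ∈ ℝ^d and t > 0. Then for every N > 0 there exists a constant C' > 0 such that the kernel K(x,y) := ∫₀^∞ p_t(x,y) t^{α/2−1} dt satisfies |K(x,y)| ≤ C' (1 + |x−y|(1/ρ(x) + 1/ρ(y)))^{−N} |x−y|^{α−d} for all x, y ∈ ℝ^d with x ≠ y. -/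
open MeasureTheory ENNReal
open scoped ComplexOrder

noncomputable section

namespace Paper

variable {d n : ℕ}

/-- `ℝ^d` with the Euclidean norm. -/
abbrev Rd (d : ℕ) := EuclideanSpace ℝ (Fin d)

/-- `ℂ^n` with the Euclidean norm. -/
abbrev Cn (n : ℕ) := EuclideanSpace ℂ (Fin n)

/-- `n × n` complex matrices. -/
abbrev Mat (n : ℕ) := Matrix (Fin n) (Fin n) ℂ

/-- The conjugate (dual) exponent `p' = p/(p-1)`. -/
def dualExp (p : ℝ) : ℝ := p / (p - 1)

/-- A (half-open) axis-parallel cube in `ℝ^d`, given by its center and side length. -/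
structure Cube (d : ℕ) where
  center : Rd d
  side : ℝ
  side_pos : 0 < side

/-- The set underlying a cube. -/
def Cube.carrier (Q : Cube d) : Set (Rd d) :=
  {y | ∀ i, Q.center i - Q.side / 2 ≤ y i ∧ y i < Q.center i + Q.side / 2}

/-- The Lebesgue measure `|Q|` of a cube. -/
def Cube.vol (Q : Cube d) : ℝ≥0∞ := volume Q.carrier

/-- A critical radius function on `ℝ^d`. -/
def IsCriticalRadius (ρ : Rd d → ℝ) : Prop :=
  Measurable ρ ∧ (∀ x, 0 < ρ x) ∧
    ∃ C₀ N₀ : ℝ, 0 < C₀ ∧ 0 < N₀ ∧ ∀ x y : Rd d,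
      C₀⁻¹ * ρ x * (1 + dist x y / ρ x) ^ (-N₀) ≤ ρ y ∧
      ρ y ≤ C₀ * ρ x * (1 + dist x y / ρ x) ^ (N₀ / (N₀ + 1))

/-- `ψ_θ(Q) = (1 + l_Q/ρ(x_Q))^θ`. -/
def psi (θ : ℝ) (ρ : Rd d → ℝ) (Q : Cube d) : ℝ := (1 + Q.side / ρ Q.center) ^ θ

/-- `ρ̃(Q) = sup_{x ∈ Q} ρ(x)`. -/
def rhoSup (ρ : Rd d → ℝ) (Q : Cube d) : ℝ := sSup (ρ '' Q.carrier)

/-- `ψ̃_θ(Q) = (1 + l_Q/ρ̃(Q))^θ`. -/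
def psiT (θ : ℝ) (ρ : Rd d → ℝ) (Q : Cube d) : ℝ := (1 + Q.side / rhoSup ρ Q) ^ θ

/-- `ψ(Q)·|Q|`, as an extended nonnegative real. -/
def wvol (w : Cube d → ℝ) (Q : Cube d) : ℝ≥0∞ := ENNReal.ofReal (w Q) * Q.vol

/-- The action of an `n × n` matrix on `ℂ^n` (with the Euclidean norm). -/
def mulVecE (A : Mat n) (v : Cn n) : Cn n :=
  (WithLp.equiv 2 (Fin n → ℂ)).symm (A.mulVec (WithLp.equiv 2 (Fin n → ℂ) v))

/-- The operator norm `|A|_op` of a matrix acting on `ℓ²`. -/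
def opNorm (A : Mat n) : ℝ := ⨆ v : Cn n, ‖mulVecE A v‖ / ‖v‖

/-- The real power `A^r` of a Hermitian matrix, defined through the spectral
decomposition (junk value `0` if `A` is not Hermitian). -/
def rpowMat (A : Mat n) (r : ℝ) : Mat n :=
  if hA : A.IsHermitian then
    (hA.eigenvectorUnitary : Mat n) *
      Matrix.diagonal (fun i => ((hA.eigenvalues i ^ r : ℝ) : ℂ)) *
      (star (hA.eigenvectorUnitary : Mat n))
  else 0

/-- A matrix weight: measurable, a.e. positive definite (hence Hermitian), with locally
integrable entries. -/
def IsMatrixWeight (W : Rd d → Mat n) : Prop :=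
  (∀ i j, Measurable fun x => W x i j) ∧
  (∀ i j, LocallyIntegrable (fun x => W x i j) volume) ∧
  ∀ᵐ x : Rd d, (W x).PosDef

/-- The matrix `U(x)^{1/q} V(y)^{-1/q}`. -/
def UV (q : ℝ) (U V : Rd d → Mat n) (x y : Rd d) : Mat n :=
  rpowMat (U x) (1/q) * rpowMat (V y) (-(1/q))

/-- The two-weight matrix `A_{p,q}` constant with respect to a cube weight `w`
(the case `p = 1` is interpreted with the essential supremum). -/
def pairApqOf (w : Cube d → ℝ) (p q : ℝ) (U V : Rd d → Mat n) : ℝ≥0∞ :=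
  if p = 1 then
    ⨆ Q : Cube d, essSup
      (fun y => (wvol w Q)⁻¹ * ∫⁻ x in Q.carrier, ENNReal.ofReal (opNorm (UV q U V x y) ^ q))
      (volume.restrict Q.carrier)
  else
    ⨆ Q : Cube d,
      (wvol w Q)⁻¹ * ∫⁻ x in Q.carrier,
        ((wvol w Q)⁻¹ * ∫⁻ y in Q.carrier,
          ENNReal.ofReal (opNorm (UV q U V x y) ^ dualExp p)) ^ (q / dualExp p)

/-- The constant `[U,V]_{𝒜_{p,q}^{ρ,θ}}`. -/
def pairApq (ρ : Rd d → ℝ) (θ p q : ℝ) (U V : Rd d → Mat n) : ℝ≥0∞ :=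
  pairApqOf (psi θ ρ) p q U V

/-- The one-weight constant `[W]_{𝒜_{p,q}^{ρ,θ}}`. -/
def matApq (ρ : Rd d → ℝ) (θ p q : ℝ) (W : Rd d → Mat n) : ℝ≥0∞ :=
  pairApq ρ θ p q W W

/-- The one-weight constant `[W]_{Ã_{p,q}^{ρ,θ}}` (with `ψ̃` in place of `ψ`). -/
def matApqT (ρ : Rd d → ℝ) (θ p q : ℝ) (W : Rd d → Mat n) : ℝ≥0∞ :=
  pairApqOf (psiT θ ρ) p q W W

/-- The scalar constant `[ω]_{A_{p,q}^{ρ,θ}}` (the case `p = 1` interpreted as usual). -/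
def scalarApq (ρ : Rd d → ℝ) (θ p q : ℝ) (ω : Rd d → ℝ) : ℝ≥0∞ :=
  if p = 1 then
    ⨆ Q : Cube d, essSup
      (fun y => (ENNReal.ofReal (ω y))⁻¹ *
        ((wvol (psi θ ρ) Q)⁻¹ * ∫⁻ x in Q.carrier, ENNReal.ofReal (ω x)))
      (volume.restrict Q.carrier)
  else
    ⨆ Q : Cube d,
      ((wvol (psi θ ρ) Q)⁻¹ * ∫⁻ x in Q.carrier, ENNReal.ofReal (ω x)) *
      ((wvol (psi θ ρ) Q)⁻¹ * ∫⁻ x in Q.carrier,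
        (ENNReal.ofReal (ω x)) ^ (-(dualExp p / q))) ^ (q / dualExp p)

/-- The (unweighted) `L^p` norm of a `ℂ^n`-valued function. -/
def vLp (p : ℝ) (f : Rd d → Cn n) : ℝ≥0∞ := (∫⁻ x, ENNReal.ofReal (‖f x‖ ^ p)) ^ (1/p)

/-- The matrix-weighted norm `‖f‖_{L^p(W^{p/q})} = (∫ |W^{1/q} f|^p)^{1/p}`; for `p = q`
this is `‖f‖_{L^q(W)}`. -/
def wLp (p q : ℝ) (W : Rd d → Mat n) (f : Rd d → Cn n) : ℝ≥0∞ :=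
  (∫⁻ x, ENNReal.ofReal (‖mulVecE (rpowMat (W x) (1/q)) (f x)‖ ^ p)) ^ (1/p)

/-- The `L^q` norm of an `ℝ≥0∞`-valued function. -/
def eLq (q : ℝ) (g : Rd d → ℝ≥0∞) : ℝ≥0∞ := (∫⁻ x, g x ^ q) ^ (1/q)

/-- The weak `L^{q,∞}` quasinorm of an `ℝ≥0∞`-valued function. -/
def weakLq (q : ℝ) (g : Rd d → ℝ≥0∞) : ℝ≥0∞ :=
  ⨆ lam : {l : ℝ // 0 < l},
    ENNReal.ofReal lam.1 * (volume {x | ENNReal.ofReal lam.1 < g x}) ^ (1/q)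

/-- The two-weight fractional maximal operator `M_{U,V,ψ_θ,α}` (sup over all cubes
containing `x`). -/
def MfracPair (ρ : Rd d → ℝ) (θ α q : ℝ) (U V : Rd d → Mat n)
    (f : Rd d → Cn n) (x : Rd d) : ℝ≥0∞ :=
  ⨆ Q : {Q : Cube d // x ∈ Q.carrier},
    (wvol (psi θ ρ) Q.1) ^ (α / (d:ℝ) - 1) *
      ∫⁻ y in Q.1.carrier, ENNReal.ofReal ‖mulVecE (UV q U V x y) (f y)‖

/-- The Gaussian-type upper bound with critical radius decay for a heat kernel. -/
def GaussianUpper (ρ : Rd d → ℝ) (p : ℝ → Rd d → Rd d → ℝ) : Prop :=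
  Measurable (fun z : ℝ × Rd d × Rd d => p z.1 z.2.1 z.2.2) ∧
  ∀ N : ℝ, 0 < N → ∃ c C : ℝ, 0 < c ∧ 0 < C ∧
    ∀ t : ℝ, 0 < t → ∀ x y : Rd d,
      |p t x y| ≤ C * t ^ (-(d:ℝ)/2) * Real.exp (-(dist x y ^ 2) / (c * t)) *
        (1 + Real.sqrt t / ρ x + Real.sqrt t / ρ y) ^ (-N)

/-- `K(x,y) = ∫₀^∞ p_t(x,y) t^{α/2-1} dt`, the kernel of `L^{-α/2}`. -/
def fracIntKer (p : ℝ → Rd d → Rd d → ℝ) (α : ℝ) (x y : Rd d) : ℝ :=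
  ∫ t in Set.Ioi (0:ℝ), p t x y * t ^ (α/2 - 1)

/-- The fractional integral `L^{-α/2} f(x) = ∫₀^∞ (∫ p_t(x,y) f(y) dy) t^{α/2-1} dt`,
acting componentwise on `ℂ^n`-valued functions. -/
def fracInt (p : ℝ → Rd d → Rd d → ℝ) (α : ℝ) (f : Rd d → Cn n) (x : Rd d) : Cn n :=
  (WithLp.equiv 2 (Fin n → ℂ)).symm fun i =>
    ∫ t in Set.Ioi (0:ℝ),
      (∫ y, (p t x y : ℂ) * (WithLp.equiv 2 (Fin n → ℂ)) (f y) i) * ((t ^ (α/2 - 1) : ℝ) : ℂ)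

/-- A Young function. -/
def IsYoung (Φ : ℝ → ℝ) : Prop :=
  ContinuousOn Φ (Set.Ici 0) ∧ MonotoneOn Φ (Set.Ici 0) ∧ ConvexOn ℝ (Set.Ici 0) Φ ∧
    Φ 0 = 0 ∧ Filter.Tendsto (fun t => Φ t / t) Filter.atTop Filter.atTop

/-- The complementary Young function `Φ̄(t) = sup_{s>0} (st - Φ(s))`. -/
def youngConj (Φ : ℝ → ℝ) (t : ℝ) : ℝ := sSup {y | ∃ s : ℝ, 0 < s ∧ y = s * t - Φ s}

/-- The class `B_{p,q}`: `∫₁^∞ A(t)^{q/p} t^{-q-1} dt < ∞`. -/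
def MemB (A : ℝ → ℝ) (p q : ℝ) : Prop :=
  ∫⁻ t in Set.Ioi (1:ℝ), ENNReal.ofReal (A t ^ (q / p) / t ^ (q + 1)) < ⊤

/-- Extension of a Young function to `ℝ≥0∞`. -/
def phiExt (Φ : ℝ → ℝ) (a : ℝ≥0∞) : ℝ≥0∞ :=
  if a = ⊤ then ⊤ else ENNReal.ofReal (Φ a.toReal)

/-- The localized Orlicz norm `‖f‖_{Φ,Q}` of an `ℝ≥0∞`-valued function. -/
def orliczNormE (Φ : ℝ → ℝ) (Q : Cube d) (f : Rd d → ℝ≥0∞) : ℝ≥0∞ :=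
  sInf {l : ℝ≥0∞ | ∃ lam : ℝ, 0 < lam ∧ l = ENNReal.ofReal lam ∧
    ∫⁻ x in Q.carrier, phiExt Φ (f x / ENNReal.ofReal lam) ≤ Q.vol}

/-- A reducing-operator family for `U` (with power `1/q`), with explicit comparison
constants `c₁ ≤ c₂`. -/
def IsReducingFamilyWith (c₁ c₂ q : ℝ) (U : Rd d → Mat n) (R : Cube d → Mat n) : Prop :=
  (∀ Q : Cube d, (R Q).PosDef) ∧
  ∀ (Q : Cube d) (e : Cn n),
    ENNReal.ofReal c₁ *
        (Q.vol⁻¹ * ∫⁻ x in Q.carrier,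
          ENNReal.ofReal (‖mulVecE (rpowMat (U x) (1/q)) e‖ ^ q)) ^ (1/q)
      ≤ ENNReal.ofReal ‖mulVecE (R Q) e‖ ∧
    ENNReal.ofReal ‖mulVecE (R Q) e‖
      ≤ ENNReal.ofReal c₂ *
          (Q.vol⁻¹ * ∫⁻ x in Q.carrier,
            ENNReal.ofReal (‖mulVecE (rpowMat (U x) (1/q)) e‖ ^ q)) ^ (1/q)

/-- The auxiliary maximal operator `M_{𝒰,V,ψ_θ,α}` built from reducing operators. -/
def MfracRed (ρ : Rd d → ℝ) (θ α q : ℝ) (R : Cube d → Mat n) (V : Rd d → Mat n)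
    (f : Rd d → Cn n) (x : Rd d) : ℝ≥0∞ :=
  ⨆ Q : {Q : Cube d // x ∈ Q.carrier},
    (wvol (psi θ ρ) Q.1) ^ (α / (d:ℝ) - 1) *
      ∫⁻ y in Q.1.carrier, ENNReal.ofReal ‖mulVecE (R Q.1 * rpowMat (V y) (-(1/q))) (f y)‖

/-- The auxiliary averaging operator `𝒜_Q^{α,θ}`. -/
def auxAvg (ρ : Rd d → ℝ) (θ α q : ℝ) (R : Cube d → Mat n) (V : Rd d → Mat n)
    (Q : Cube d) (f : Rd d → Cn n) (x : Rd d) : ℝ≥0∞ :=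
  Set.indicator Q.carrier
    (fun _ => (wvol (psi θ ρ) Q) ^ (α / (d:ℝ) - 1) *
      ∫⁻ y in Q.carrier, ENNReal.ofReal ‖mulVecE (R Q * rpowMat (V y) (-(1/q))) (f y)‖) x

/-- The averaging operator `A_Q^{α,θ} f = χ_Q (ψ_θ(Q)|Q|)^{α/d-1} ∫_Q f`. -/
def avgOp (ρ : Rd d → ℝ) (θ α : ℝ) (Q : Cube d) (f : Rd d → Cn n) (x : Rd d) : Cn n :=
  Set.indicator Q.carrier
    (fun _ => ((psi θ ρ Q * Q.vol.toReal) ^ (α / (d:ℝ) - 1)) • ∫ y in Q.carrier, f y) x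

/-- A dyadic grid: all cubes have dyadic side lengths, any two are nested or disjoint,
and those of a fixed side length partition `ℝ^d`. -/
def IsDyadicGrid (𝒟 : Set (Cube d)) : Prop :=
  (∀ Q ∈ 𝒟, ∃ k : ℤ, Q.side = 2 ^ k) ∧
  (∀ Q₁ ∈ 𝒟, ∀ Q₂ ∈ 𝒟,
    Q₁.carrier ⊆ Q₂.carrier ∨ Q₂.carrier ⊆ Q₁.carrier ∨ Disjoint Q₁.carrier Q₂.carrier) ∧
  (∀ k : ℤ, ∀ x : Rd d, ∃! Q : Cube d, Q ∈ 𝒟 ∧ Q.side = 2 ^ k ∧ x ∈ Q.carrier)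

/-- The translated dyadic grid `𝒟^t = {2^{-k}([0,1)^d + m + (-1)^k t)}`. -/
def stdGrid (d : ℕ) (t : Fin d → ℝ) : Set (Cube d) :=
  {Q | ∃ (k : ℤ) (m : Fin d → ℤ), Q.side = (2:ℝ) ^ (-k) ∧
    ∀ i, Q.center i = (2:ℝ) ^ (-k) * ((m i : ℝ) + (-1 : ℝ) ^ k * t i + 1/2)}

/-- Encoding of the parameter set `{0,1/3}^d`. -/
def boolParam (d : ℕ) (t : Fin d → Bool) : Fin d → ℝ := fun i => if t i then 1/3 else 0

/-- The dyadic two-weight fractional maximal operator with `ψ̃`. -/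
def MfracPairD (𝒟 : Set (Cube d)) (ρ : Rd d → ℝ) (θ α q : ℝ) (U V : Rd d → Mat n)
    (f : Rd d → Cn n) (x : Rd d) : ℝ≥0∞ :=
  ⨆ Q : {Q : Cube d // Q ∈ 𝒟 ∧ x ∈ Q.carrier},
    (wvol (psiT θ ρ) Q.1) ^ (α / (d:ℝ) - 1) *
      ∫⁻ y in Q.1.carrier, ENNReal.ofReal ‖mulVecE (UV q U V x y) (f y)‖

/-- The dyadic auxiliary maximal operator (with reducing operators and `ψ̃`). -/
def MfracRedD (𝒟 : Set (Cube d)) (ρ : Rd d → ℝ) (θ α q : ℝ) (R : Cube d → Mat n)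
    (V : Rd d → Mat n) (f : Rd d → Cn n) (x : Rd d) : ℝ≥0∞ :=
  ⨆ Q : {Q : Cube d // Q ∈ 𝒟 ∧ x ∈ Q.carrier},
    (wvol (psiT θ ρ) Q.1) ^ (α / (d:ℝ) - 1) *
      ∫⁻ y in Q.1.carrier, ENNReal.ofReal ‖mulVecE (R Q.1 * rpowMat (V y) (-(1/q))) (f y)‖

/-- The cubes of `𝒟` that are maximal among those on which `F` exceeds `c`. -/
def maximalAbove (𝒟 : Set (Cube d)) (F : Cube d → ℝ≥0∞) (c : ℝ≥0∞) : Set (Cube d) :=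
  {Q | Q ∈ 𝒟 ∧ c < F Q ∧ ∀ Q' ∈ 𝒟, Q.carrier ⊆ Q'.carrier → Q ≠ Q' → ¬ c < F Q'}

/-- The bump constant `[U,V]_{p,q,α,ψ_θ,Φ,Ψ}` for the fractional integral. -/
def bumpFI (ρ : Rd d → ℝ) (θ α p q : ℝ) (Φ Ψ : ℝ → ℝ) (U V : Rd d → Mat n) : ℝ≥0∞ :=
  ⨆ Q : Cube d,
    Q.vol ^ (α / (d:ℝ) + 1/q - 1/p) * (ENNReal.ofReal (psi (θ/3) ρ Q))⁻¹ *
      orliczNormE Ψ Q (fun x =>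
        orliczNormE Φ Q (fun y => ENNReal.ofReal (opNorm (UV q U V x y))))

/-- The bump constant `[U,V]_{p,q,α,ψ_{θ'},Φ}` for the fractional maximal operator. -/
def bumpM (ρ : Rd d → ℝ) (θ' α p q : ℝ) (Φ : ℝ → ℝ) (U V : Rd d → Mat n) : ℝ≥0∞ :=
  ⨆ Q : Cube d,
    Q.vol ^ (α / (d:ℝ) + 1/q - 1/p) * (ENNReal.ofReal (psi (θ'/3) ρ Q)) ^ (α / (d:ℝ) - 1) *
      (Q.vol⁻¹ * ∫⁻ x in Q.carrier,
        (orliczNormE Φ Q (fun y => ENNReal.ofReal (opNorm (UV q U V x y)))) ^ q) ^ (1/q)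

end Paper
open Paper


section AuxKernelBound

open MeasureTheory Set

private lemma aux_bounded0 {c γ : ℝ} (hc : 0 < c) :
    ∃ K : ℝ, 0 < K ∧ ∀ u : ℝ, u ∈ Set.Ioc (0:ℝ) 1 →
      u ^ (-γ) * Real.exp (-1 / (c * u)) ≤ K := by
  set k := ⌈γ⌉₊ with hk
  refine ⟨(Nat.factorial k : ℝ) * c ^ k, by positivity, fun u hu => ?_⟩
  obtain ⟨hu0, hu1⟩ := hu
  have hcu : 0 < c * u := by positivity
  have hxe : (1 / (c * u)) ^ k / (Nat.factorial k : ℝ) ≤ Real.exp (1 / (c * u)) :=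
    Real.pow_div_factorial_le_exp _ (by positivity) k
  have hE : Real.exp (-1 / (c * u)) ≤ (Nat.factorial k : ℝ) * (c * u) ^ k := by
    rw [neg_div, Real.exp_neg]
    have h0 : (0:ℝ) < (1 / (c * u)) ^ k / (Nat.factorial k : ℝ) := by positivity
    calc (Real.exp (1 / (c * u)))⁻¹ ≤ ((1 / (c * u)) ^ k / (Nat.factorial k : ℝ))⁻¹ := by gcongr
      _ = (Nat.factorial k : ℝ) * (c * u) ^ k := by
          rw [inv_div, one_div, inv_pow, div_inv_eq_mul]
  calc u ^ (-γ) * Real.exp (-1 / (c * u))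
      ≤ u ^ (-γ) * ((Nat.factorial k : ℝ) * (c * u) ^ k) :=
        mul_le_mul_of_nonneg_left hE (Real.rpow_nonneg hu0.le _)
    _ = (Nat.factorial k : ℝ) * c ^ k * (u ^ (-γ) * u ^ (k : ℕ)) := by rw [mul_pow]; ring
    _ = (Nat.factorial k : ℝ) * c ^ k * u ^ ((k : ℝ) - γ) := by
        rw [← Real.rpow_natCast u k, ← Real.rpow_add hu0]; ring_nf
    _ ≤ (Nat.factorial k : ℝ) * c ^ k * 1 := by
        gcongr
        exact Real.rpow_le_one hu0.le hu1 (by simpa using sub_nonneg.2 (Nat.le_ceil γ))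
    _ = (Nat.factorial k : ℝ) * c ^ k := mul_one _

private lemma aux_integrable0 {c β N : ℝ} (hc : 0 < c) (hβ : β < 0) (hN : 0 < N) :
    IntegrableOn
      (fun u : ℝ => (1 + 1/Real.sqrt u) ^ N * u ^ (β - 1) * Real.exp (-1 / (c * u)))
      (Set.Ioi (0:ℝ)) := by
  set h : ℝ → ℝ := fun u => (1 + 1/Real.sqrt u) ^ N * u ^ (β - 1) * Real.exp (-1 / (c * u))
    with hdef
  have hmeas : Measurable h := by rw [hdef]; fun_prop
  have hnn : ∀ u : ℝ, 0 < u → 0 ≤ h u := by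
    intro u hu
    have h1 : (0:ℝ) ≤ 1 + 1/Real.sqrt u := by positivity
    have h2 : (0:ℝ) ≤ u ^ (β - 1) := Real.rpow_nonneg hu.le _
    rw [hdef]; positivity
  have hsplit : Ioc (0:ℝ) 1 ∪ Ioi 1 = Ioi 0 := Ioc_union_Ioi_eq_Ioi zero_le_one
  rw [← hsplit]
  apply IntegrableOn.union
  · set γ : ℝ := N/2 + 1 - β with hγ
    obtain ⟨K, hK, hKb⟩ := aux_bounded0 (γ := γ) hc
    refine Integrable.mono' (g := fun _ => (2:ℝ) ^ N * K)
      (integrableOn_const measure_Ioc_lt_top.ne enorm_ne_top) hmeas.aestronglyMeasurable ?_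
    rw [ae_restrict_iff' measurableSet_Ioc]
    refine ae_of_all _ fun u hu => ?_
    obtain ⟨hu0, hu1⟩ := hu
    have hsq : 0 < Real.sqrt u := Real.sqrt_pos.2 hu0
    rw [Real.norm_eq_abs, abs_of_nonneg (hnn u hu0)]
    have hfac : (1 + 1/Real.sqrt u) ^ N ≤ (2:ℝ) ^ N * u ^ ((-(1/2)) * N) := by
      have hle : 1 + 1/Real.sqrt u ≤ 2 * u ^ (-(1/2) : ℝ) := by
        have e1 : u ^ (-(1/2) : ℝ) = 1/Real.sqrt u := by
          rw [Real.rpow_neg hu0.le, Real.sqrt_eq_rpow]; norm_num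
        rw [e1]
        have hsl : Real.sqrt u ≤ 1 := by
          rw [show (1:ℝ) = Real.sqrt 1 by simp]
          exact Real.sqrt_le_sqrt hu1
        have : (1:ℝ) ≤ 1/Real.sqrt u := one_le_one_div hsq hsl
        linarith
      calc (1 + 1/Real.sqrt u) ^ N ≤ (2 * u ^ (-(1/2) : ℝ)) ^ N :=
            Real.rpow_le_rpow (by positivity) hle hN.le
        _ = (2:ℝ) ^ N * u ^ ((-(1/2)) * N) := by
            rw [Real.mul_rpow (by norm_num) (Real.rpow_nonneg hu0.le _),
              ← Real.rpow_mul hu0.le]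
    have hE0 : 0 < Real.exp (-1 / (c * u)) := Real.exp_pos _
    have hQ : (0:ℝ) ≤ u ^ (β - 1) := Real.rpow_nonneg hu0.le _
    calc h u ≤ ((2:ℝ) ^ N * u ^ ((-(1/2)) * N)) * u ^ (β - 1) * Real.exp (-1 / (c * u)) := by
          apply mul_le_mul_of_nonneg_right _ hE0.le
          exact mul_le_mul_of_nonneg_right hfac hQ
      _ = (2:ℝ) ^ N * (u ^ (-γ) * Real.exp (-1 / (c * u))) := by
          rw [mul_assoc ((2:ℝ)^N), ← Real.rpow_add hu0, hγ]
          ring_nf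
      _ ≤ (2:ℝ) ^ N * K :=
          mul_le_mul_of_nonneg_left (hKb u ⟨hu0, hu1⟩) (by positivity)
  · refine Integrable.mono' (g := fun u => (2:ℝ) ^ N * u ^ (β - 1))
      ((integrableOn_Ioi_rpow_of_lt (by linarith) one_pos).const_mul _)
      hmeas.aestronglyMeasurable ?_
    rw [ae_restrict_iff' measurableSet_Ioi]
    refine ae_of_all _ fun u hu => ?_
    have hu0 : (0:ℝ) < u := lt_trans one_pos hu
    have hsq : (1:ℝ) ≤ Real.sqrt u := by
      rw [show (1:ℝ) = Real.sqrt 1 by simp]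
      exact Real.sqrt_le_sqrt (le_of_lt hu)
    rw [Real.norm_eq_abs, abs_of_nonneg (hnn u hu0)]
    have hP : (1 + 1/Real.sqrt u) ^ N ≤ (2:ℝ) ^ N := by
      apply Real.rpow_le_rpow (by positivity) _ hN.le
      have : 1/Real.sqrt u ≤ 1 := by
        rw [div_le_one (by linarith)]; exact hsq
      linarith
    have hE : Real.exp (-1 / (c * u)) ≤ 1 := by
      rw [Real.exp_le_one_iff, neg_div]
      simp only [Left.neg_nonpos_iff]
      positivity
    have hQ : (0:ℝ) ≤ u ^ (β - 1) := Real.rpow_nonneg hu0.le _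
    calc (1 + 1/Real.sqrt u) ^ N * u ^ (β - 1) * Real.exp (-1 / (c * u))
        ≤ (1 + 1/Real.sqrt u) ^ N * u ^ (β - 1) * 1 := by
          apply mul_le_mul_of_nonneg_left hE
          positivity
      _ ≤ (2:ℝ) ^ N * u ^ (β - 1) := by
          rw [mul_one]
          exact mul_le_mul_of_nonneg_right hP hQ

end AuxKernelBound

/-- pointwise upper bound for the kernel of `L^{-α/2}`. -/
theorem statement_0 (d : ℕ) (hd : 1 ≤ d) (α : ℝ) (hα0 : 0 < α) (hαd : α < d)
    (ρ : Rd d → ℝ) (hρ : IsCriticalRadius ρ)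
    (p : ℝ → Rd d → Rd d → ℝ) (hp : GaussianUpper ρ p) :
    ∀ N : ℝ, 0 < N → ∃ C' : ℝ, 0 < C' ∧ ∀ x y : Rd d, x ≠ y →
      |fracIntKer p α x y| ≤
        C' * (1 + dist x y * ((ρ x)⁻¹ + (ρ y)⁻¹)) ^ (-N) * dist x y ^ (α - d) := by
  intro N hN
  obtain ⟨c, C, hc, hC, hpb⟩ := hp.2 N hN
  set β : ℝ := (α - d) / 2 with hβdef
  have hβ : β < 0 := by rw [hβdef]; linarith
  set h : ℝ → ℝ := fun u => (1 + 1/Real.sqrt u) ^ N * u ^ (β - 1) * Real.exp (-1 / (c * u))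
    with hhdef
  have hInt : MeasureTheory.IntegrableOn h (Set.Ioi (0:ℝ)) := aux_integrable0 hc hβ hN
  have hh_nn : ∀ u : ℝ, 0 < u → 0 ≤ h u := by
    intro u hu
    have h1 : (0:ℝ) ≤ 1 + 1/Real.sqrt u := by positivity
    have h2 : (0:ℝ) ≤ u ^ (β - 1) := Real.rpow_nonneg hu.le _
    rw [hhdef]; positivity
  set I : ℝ := ∫ u in Set.Ioi (0:ℝ), h u with hIdef
  have hI0 : 0 ≤ I := setIntegral_nonneg measurableSet_Ioi (fun u hu => hh_nn u hu)
  refine ⟨C * (I + 1), by positivity, fun x y hxy => ?_⟩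
  set r : ℝ := dist x y with hrdef
  have hr : 0 < r := dist_pos.2 hxy
  have hρx := hρ.2.1 x
  have hρy := hρ.2.1 y
  set s : ℝ := (ρ x)⁻¹ + (ρ y)⁻¹ with hsdef
  have hs0 : 0 ≤ s := by rw [hsdef]; positivity
  set F : ℝ → ℝ := fun t => (1 + r / Real.sqrt t) ^ N * t ^ (β - 1) *
    Real.exp (-(r ^ 2) / (c * t)) with hFdef
  set b : ℝ := (r ^ 2)⁻¹ with hbdef
  have hb : 0 < b := by rw [hbdef]; positivity
  have hscale : ∀ t : ℝ, t ∈ Set.Ioi (0:ℝ) → h (b * t) = r ^ (2 - 2*β) * F t := by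
    intro t ht
    have ht0 : (0:ℝ) < t := ht
    have hst : 0 < Real.sqrt t := Real.sqrt_pos.2 ht0
    have e1 : Real.sqrt (b * t) = r⁻¹ * Real.sqrt t := by
      rw [hbdef, Real.sqrt_mul (by positivity), Real.sqrt_inv, Real.sqrt_sq hr.le]
    have e2 : 1 / (r⁻¹ * Real.sqrt t) = r / Real.sqrt t := by
      field_simp
    have e3 : (b * t) ^ (β - 1) = r ^ (2 - 2*β) * t ^ (β - 1) := by
      rw [Real.mul_rpow hb.le ht0.le]
      congr 1
      have hb2 : b = r ^ (-2 : ℝ) := by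
        rw [hbdef, Real.rpow_neg hr.le, show ((2:ℝ)) = ((2:ℕ):ℝ) by norm_num,
          Real.rpow_natCast]
      rw [hb2, ← Real.rpow_mul hr.le]
      congr 1; ring
    have e4 : -1 / (c * (b * t)) = -(r ^ 2) / (c * t) := by
      rw [hbdef]; field_simp
    rw [hhdef, hFdef]
    simp only
    rw [e1, e2, e3, e4]
    ring
  have hEq : Set.EqOn (fun t => r ^ (2*β - 2) * h (b * t)) F (Set.Ioi (0:ℝ)) := by
    intro t ht
    simp only
    rw [hscale t ht, ← mul_assoc, ← Real.rpow_add hr,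
      show (2*β - 2) + (2 - 2*β) = (0:ℝ) by ring, Real.rpow_zero, one_mul]
  have hcomp : MeasureTheory.IntegrableOn (fun t => h (b * t)) (Set.Ioi (0:ℝ)) := by
    have h' := (integrableOn_Ioi_comp_mul_left_iff h 0 hb).2
    rw [mul_zero] at h'
    exact h' hInt
  have hcm : MeasureTheory.IntegrableOn (fun t => r ^ (2*β - 2) * h (b * t))
      (Set.Ioi (0:ℝ)) := hcomp.const_mul _
  have hFint : MeasureTheory.IntegrableOn F (Set.Ioi (0:ℝ)) :=
    hcm.congr_fun hEq measurableSet_Ioi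
  have hFval : ∫ t in Set.Ioi (0:ℝ), F t = r ^ (α - (d:ℝ)) * I := by
    rw [← setIntegral_congr_fun measurableSet_Ioi hEq, integral_const_mul]
    have hcl := integral_comp_mul_left_Ioi h 0 hb
    rw [mul_zero] at hcl
    rw [hcl, smul_eq_mul, hbdef, inv_inv, ← hIdef,
      show (r^2 : ℝ) = r ^ ((2:ℕ):ℝ) from (Real.rpow_natCast r 2).symm,
      ← mul_assoc, ← Real.rpow_add hr]
    congr 2
    rw [hβdef]; push_cast; ring
  have hdom : ∀ t : ℝ, t ∈ Set.Ioi (0:ℝ) →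
      |p t x y * t ^ (α/2 - 1)| ≤ C * (1 + r*s) ^ (-N) * F t := by
    intro t ht
    have ht0 : (0:ℝ) < t := ht
    have hst : 0 < Real.sqrt t := Real.sqrt_pos.2 ht0
    have hbase : (0:ℝ) < 1 + Real.sqrt t * s := by positivity
    have hrs : (0:ℝ) < 1 + r * s := by positivity
    have hA : (0:ℝ) < 1 + r / Real.sqrt t := by positivity
    have key : (1 + Real.sqrt t * s) ^ (-N) ≤ (1 + r / Real.sqrt t) ^ N * (1 + r*s) ^ (-N) := by
      have hmul : 1 + r * s ≤ (1 + r / Real.sqrt t) * (1 + Real.sqrt t * s) := by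
        have expand : (1 + r / Real.sqrt t) * (1 + Real.sqrt t * s)
            = 1 + Real.sqrt t * s + r / Real.sqrt t + r * s := by
          field_simp
          ring
        rw [expand]
        have h1 := mul_nonneg hst.le hs0
        have h2 := div_nonneg hr.le hst.le
        calc 1 + r * s ≤ 1 + r * s + (Real.sqrt t * s + r / Real.sqrt t) :=
              le_add_of_nonneg_right (add_nonneg h1 h2)
          _ = 1 + Real.sqrt t * s + r / Real.sqrt t + r * s := by ring
      have hpow : (1 + r*s) ^ N ≤ (1 + r / Real.sqrt t) ^ N * (1 + Real.sqrt t * s) ^ N := by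
        rw [← Real.mul_rpow hA.le hbase.le]
        exact Real.rpow_le_rpow hrs.le hmul hN.le
      rw [Real.rpow_neg hbase.le, Real.rpow_neg hrs.le]
      have hApos : (0:ℝ) < (1 + r / Real.sqrt t) ^ N := Real.rpow_pos_of_pos hA N
      have hBpos : (0:ℝ) < (1 + r * s) ^ N := Real.rpow_pos_of_pos hrs N
      calc ((1 + Real.sqrt t * s) ^ N)⁻¹
          = (1 + r / Real.sqrt t) ^ N *
              ((1 + r / Real.sqrt t) ^ N * (1 + Real.sqrt t * s) ^ N)⁻¹ := by
            rw [mul_inv, ← mul_assoc, mul_inv_cancel₀ hApos.ne', one_mul]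
        _ ≤ (1 + r / Real.sqrt t) ^ N * ((1 + r * s) ^ N)⁻¹ := by gcongr
    have hbnd := hpb t ht0 x y
    have hbeq : 1 + Real.sqrt t / ρ x + Real.sqrt t / ρ y = 1 + Real.sqrt t * s := by
      simp only [hsdef, div_eq_mul_inv]; ring
    rw [hbeq, ← hrdef] at hbnd
    have hX : (0:ℝ) ≤ t ^ (α/2 - 1) := Real.rpow_nonneg ht0.le _
    have hA0 : (0:ℝ) ≤ C * t ^ (-(d:ℝ)/2) * Real.exp (-(r^2)/(c*t)) := by
      have h1 := Real.rpow_nonneg ht0.le (-(d:ℝ)/2)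
      positivity
    have hts : t ^ (β - 1) = t ^ (-(d:ℝ)/2) * t ^ (α/2 - 1) := by
      rw [← Real.rpow_add ht0]
      congr 1
      rw [hβdef]; ring
    calc |p t x y * t ^ (α/2 - 1)| = |p t x y| * t ^ (α/2 - 1) := by
          rw [abs_mul, abs_of_nonneg hX]
      _ ≤ (C * t ^ (-(d:ℝ)/2) * Real.exp (-(r^2)/(c*t)) * (1 + Real.sqrt t * s) ^ (-N)) *
            t ^ (α/2 - 1) :=
          mul_le_mul_of_nonneg_right hbnd hX
      _ ≤ (C * t ^ (-(d:ℝ)/2) * Real.exp (-(r^2)/(c*t)) *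
            ((1 + r / Real.sqrt t) ^ N * (1 + r*s) ^ (-N))) * t ^ (α/2 - 1) :=
          mul_le_mul_of_nonneg_right (mul_le_mul_of_nonneg_left key hA0) hX
      _ = C * (1 + r*s) ^ (-N) * F t := by
          rw [hFdef]
          simp only
          rw [hts]; ring
  have hG : MeasureTheory.IntegrableOn (fun t => C * (1 + r*s) ^ (-N) * F t)
      (Set.Ioi (0:ℝ)) := hFint.const_mul _
  have hKer : fracIntKer p α x y = ∫ t in Set.Ioi (0:ℝ), p t x y * t ^ (α/2 - 1) := rfl
  have hle : |fracIntKer p α x y| ≤ ∫ t in Set.Ioi (0:ℝ), C * (1 + r*s) ^ (-N) * F t := by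
    rw [hKer, ← Real.norm_eq_abs]
    refine norm_integral_le_of_norm_le hG ?_
    rw [ae_restrict_iff' measurableSet_Ioi]
    exact ae_of_all _ fun t ht => by rw [Real.norm_eq_abs]; exact hdom t ht
  refine hle.trans ?_
  rw [integral_const_mul, hFval]
  have hP1 : (0:ℝ) ≤ (1 + r*s) ^ (-N) := Real.rpow_nonneg (by positivity) _
  have hP2 : (0:ℝ) ≤ r ^ (α - (d:ℝ)) := Real.rpow_nonneg hr.le _
  calc C * (1 + r*s) ^ (-N) * (r ^ (α - (d:ℝ)) * I)
      = (C * I) * ((1 + r*s) ^ (-N) * r ^ (α - (d:ℝ))) := by ring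
    _ ≤ (C * (I + 1)) * ((1 + r*s) ^ (-N) * r ^ (α - (d:ℝ))) :=
        mul_le_mul_of_nonneg_right
          (mul_le_mul_of_nonneg_left (lt_add_one I).le hC.le)
          (mul_nonneg hP1 hP2)
    _ = C * (I + 1) * (1 + r*s) ^ (-N) * r ^ (α - (d:ℝ)) := by ring
end
end

section
/- Let d ≥ 1, θ ≥ 0, 0 ≤ α < d, and 1 ≤ p ≤ q < ∞ with 1/p − 1/q = α/d. Let ρ be a critical radius function and let W be an n×n matrix weight with W ∈ 𝒜_{p,q}^{ρ,θ}. Then there is a constant C (independent of W) such that for every unit vector e⃗ ∈ ℂ^n, the scalar weight ω_{e⃗}(x) := |W(x)^{1/q}e⃗|^q belongs to the scalar class A_{p,q}^{ρ,θ} and [ω_{e⃗}]_{A_{p,q}^{ρ,θ}} ≤ C [W]_{𝒜_{p,q}^{ρ,θ}}. -/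
open MeasureTheory ENNReal
open scoped ComplexOrder

noncomputable section

open Paper

section Aux
open MeasureTheory ENNReal
namespace Paper
variable {d n : ℕ}

lemma opNorm_nonneg (A : Mat n) : 0 ≤ opNorm A :=
  Real.iSup_nonneg fun v => div_nonneg (norm_nonneg _) (norm_nonneg _)

lemma mulVecE_zero (A : Mat n) : mulVecE A 0 = 0 := by
  simp [mulVecE]

lemma norm_mulVecE_le (A : Mat n) (v : Cn n) : ‖mulVecE A v‖ ≤ opNorm A * ‖v‖ := by
  have hle : ∀ w : Cn n,
      ‖mulVecE A w‖ ≤ ‖LinearMap.toContinuousLinearMap (Matrix.toEuclideanLin A)‖ * ‖w‖ :=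
    fun w => (LinearMap.toContinuousLinearMap (Matrix.toEuclideanLin A)).le_opNorm w
  have hb : BddAbove (Set.range fun w : Cn n => ‖mulVecE A w‖ / ‖w‖) := by
    refine ⟨‖LinearMap.toContinuousLinearMap (Matrix.toEuclideanLin A)‖, ?_⟩
    rintro _ ⟨w, rfl⟩
    rcases eq_or_ne w 0 with rfl | hw
    · show ‖mulVecE A 0‖ / ‖(0 : Cn n)‖ ≤ _
      rw [mulVecE_zero, norm_zero, zero_div]
      exact norm_nonneg _
    · show ‖mulVecE A w‖ / ‖w‖ ≤ _
      rw [div_le_iff₀ (norm_pos_iff.2 hw)]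
      exact hle w
  rcases eq_or_ne v 0 with rfl | hv
  · simp [mulVecE_zero]
  · have h1 : ‖mulVecE A v‖ / ‖v‖ ≤ opNorm A := le_ciSup hb v
    have h2 : ‖mulVecE A v‖ = ‖mulVecE A v‖ / ‖v‖ * ‖v‖ :=
      (div_mul_cancel₀ _ (norm_ne_zero_iff.2 hv)).symm
    rw [h2]
    exact mul_le_mul_of_nonneg_right h1 (norm_nonneg v)

lemma mulVecE_mul (A B : Mat n) (v : Cn n) : mulVecE (A * B) v = mulVecE A (mulVecE B v) := by
  simp [mulVecE, Matrix.mulVec_mulVec]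

lemma mulVecE_one (v : Cn n) : mulVecE 1 v = v := by
  simp [mulVecE]

lemma rpowMat_neg_mul {A : Mat n} (hA : A.PosDef) (r : ℝ) :
    rpowMat A (-r) * rpowMat A r = 1 := by
  have hH : A.IsHermitian := hA.isHermitian
  rw [rpowMat, rpowMat, dif_pos hH, dif_pos hH]
  set U : Mat n := (hH.eigenvectorUnitary : Mat n) with hU
  have hsU : star U * U = 1 := Unitary.coe_star_mul_self hH.eigenvectorUnitary
  have hUs : U * star U = 1 := Unitary.coe_mul_star_self hH.eigenvectorUnitary
  have key : (fun i => ((hH.eigenvalues i ^ (-r) : ℝ) : ℂ) * ((hH.eigenvalues i ^ r : ℝ) : ℂ))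
      = fun _ => (1:ℂ) := by
    funext i
    have hpos : (0:ℝ) < hH.eigenvalues i := hA.eigenvalues_pos i
    rw [← Complex.ofReal_mul, Real.rpow_neg hpos.le,
      inv_mul_cancel₀ (Real.rpow_pos_of_pos hpos r).ne']
    simp
  simp only [mul_assoc]
  rw [← mul_assoc (star U) U, hsU, one_mul,
    ← mul_assoc (Matrix.diagonal _) (Matrix.diagonal _), Matrix.diagonal_mul_diagonal, key]
  have h1 : Matrix.diagonal (fun _ : Fin n => (1:ℂ)) = 1 := Matrix.diagonal_one
  rw [h1, one_mul, hUs]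

lemma mulVecE_rpow_pos {A : Mat n} (hA : A.PosDef) (r : ℝ) {e : Cn n} (he : e ≠ 0) :
    0 < ‖mulVecE (rpowMat A r) e‖ := by
  rw [norm_pos_iff]
  intro h0
  apply he
  have h : mulVecE (rpowMat A (-r) * rpowMat A r) e = 0 := by
    rw [mulVecE_mul, h0, mulVecE_zero]
  rwa [rpowMat_neg_mul hA, mulVecE_one] at h

lemma key_ineq (q : ℝ) (W : Rd d → Mat n) {x y : Rd d}
    (hy : (W y).PosDef) (e : Cn n) :
    ‖mulVecE (rpowMat (W x) (1/q)) e‖ ≤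
      opNorm (UV q W W x y) * ‖mulVecE (rpowMat (W y) (1/q)) e‖ := by
  have hfac : rpowMat (W x) (1/q) = (UV q W W x y) * rpowMat (W y) (1/q) := by
    rw [UV, mul_assoc, rpowMat_neg_mul hy, mul_one]
  calc ‖mulVecE (rpowMat (W x) (1/q)) e‖
      = ‖mulVecE (UV q W W x y) (mulVecE (rpowMat (W y) (1/q)) e)‖ := by
        rw [← mulVecE_mul, ← hfac]
    _ ≤ _ := norm_mulVecE_le _ _

end Paper
end Aux

/-- scalar weights generated by a matrix weight in `𝒜_{p,q}^{ρ,θ}`. -/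
theorem statement_11 (d n : ℕ) (hd : 1 ≤ d) (θ α p q : ℝ)
    (hθ : 0 ≤ θ) (hα0 : 0 ≤ α) (hαd : α < d)
    (hp1 : 1 ≤ p) (hpq : p ≤ q) (heq : 1/p - 1/q = α/(d:ℝ))
    (ρ : Rd d → ℝ) (hρ : IsCriticalRadius ρ) :
    ∃ C : ℝ, 0 < C ∧ ∀ W : Rd d → Mat n, IsMatrixWeight W → matApq ρ θ p q W < ⊤ →
      ∀ e : Cn n, ‖e‖ = 1 →
        scalarApq ρ θ p q (fun x => ‖mulVecE (rpowMat (W x) (1/q)) e‖ ^ q) ≤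
          ENNReal.ofReal C * matApq ρ θ p q W := by
  refine ⟨1, one_pos, ?_⟩
  intro W hW hfin e he
  have he0 : e ≠ 0 := by
    intro h; rw [h, norm_zero] at he; exact one_ne_zero he.symm
  have hq0 : (0:ℝ) < q := lt_of_lt_of_le one_pos (hp1.trans hpq)
  set u : Rd d → ℝ≥0∞ := fun x => ENNReal.ofReal ‖mulVecE (rpowMat (W x) (1/q)) e‖ with hu
  set K : Rd d → Rd d → ℝ≥0∞ := fun x y => ENNReal.ofReal (opNorm (UV q W W x y)) with hKdef
  have hae : ∀ᵐ x : Rd d, (W x).PosDef := hW.2.2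
  have hofReal : ∀ x : Rd d,
      ENNReal.ofReal (‖mulVecE (rpowMat (W x) (1/q)) e‖ ^ q) = u x ^ q :=
    fun x => (ENNReal.ofReal_rpow_of_nonneg (norm_nonneg _) hq0.le).symm
  have hut : ∀ x, u x ≠ ⊤ := fun x => ENNReal.ofReal_ne_top
  have hu0 : ∀ x, (W x).PosDef → u x ≠ 0 := fun x hx =>
    (ENNReal.ofReal_pos.2 (mulVecE_rpow_pos hx _ he0)).ne'
  have hkey : ∀ x y, (W y).PosDef → u x ≤ K x y * u y := by
    intro x y hy
    calc u x ≤ ENNReal.ofReal (opNorm (UV q W W x y) * ‖mulVecE (rpowMat (W y) (1/q)) e‖) :=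
          ENNReal.ofReal_le_ofReal (key_ineq q W hy e)
      _ = K x y * u y := ENNReal.ofReal_mul (opNorm_nonneg _)
  rw [ENNReal.ofReal_one, one_mul]
  by_cases hp : p = 1
  · -- p = 1
    unfold scalarApq
    rw [if_pos hp]
    refine iSup_le fun Q => ?_
    have hg : essSup (fun y => (wvol (psi θ ρ) Q)⁻¹ *
        ∫⁻ x in Q.carrier, ENNReal.ofReal (opNorm (UV q W W x y) ^ q))
        (volume.restrict Q.carrier) ≤ matApq ρ θ p q W := by
      unfold matApq pairApq pairApqOf
      rw [if_pos hp]
      apply le_iSup _ Q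
    refine le_trans (essSup_mono_ae ?_) hg
    filter_upwards [ae_restrict_of_ae hae] with y hy
    have hKq : ∀ x : Rd d, ENNReal.ofReal (opNorm (UV q W W x y) ^ q) = K x y ^ q :=
      fun x => (ENNReal.ofReal_rpow_of_nonneg (opNorm_nonneg _) hq0.le).symm
    simp only [hofReal, hKq]
    set c := u y ^ q with hc
    have hc0 : c ≠ 0 := (ENNReal.rpow_pos ((hu0 y hy).bot_lt) (hut y)).ne'
    have hct : c ≠ ⊤ := ENNReal.rpow_ne_top_of_nonneg hq0.le (hut y)
    have hint : (∫⁻ x in Q.carrier, u x ^ q) ≤ (∫⁻ x in Q.carrier, K x y ^ q) * c := by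
      rw [← lintegral_mul_const' c _ hct]
      refine lintegral_mono fun x => ?_
      calc u x ^ q ≤ (K x y * u y) ^ q := ENNReal.rpow_le_rpow (hkey x y hy) hq0.le
        _ = K x y ^ q * c := ENNReal.mul_rpow_of_nonneg _ _ hq0.le
    calc c⁻¹ * ((wvol (psi θ ρ) Q)⁻¹ * ∫⁻ x in Q.carrier, u x ^ q)
        ≤ c⁻¹ * ((wvol (psi θ ρ) Q)⁻¹ * ((∫⁻ x in Q.carrier, K x y ^ q) * c)) := by gcongr
      _ = ((wvol (psi θ ρ) Q)⁻¹ * ∫⁻ x in Q.carrier, K x y ^ q) * (c⁻¹ * c) := by ring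
      _ = (wvol (psi θ ρ) Q)⁻¹ * ∫⁻ x in Q.carrier, K x y ^ q := by
          rw [ENNReal.inv_mul_cancel hc0 hct, mul_one]
  · -- p > 1
    have hp1' : 1 < p := lt_of_le_of_ne hp1 (Ne.symm hp)
    have hp0 : (0:ℝ) < p := lt_trans one_pos hp1'
    have hp' : 0 < dualExp p := div_pos hp0 (by linarith)
    have hqp' : 0 < q / dualExp p := div_pos hq0 hp'
    have hexp1 : ∀ x : Rd d, (u x ^ q) ^ (-(dualExp p / q)) = u x ^ (-(dualExp p)) := by
      intro x
      rw [← ENNReal.rpow_mul]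
      congr 1
      field_simp
    have hexp2 : -(dualExp p) * (q / dualExp p) = -q := by
      rw [neg_mul, mul_div_cancel₀ _ hp'.ne']
    unfold scalarApq
    rw [if_neg hp]
    refine iSup_le fun Q => ?_
    simp only [hofReal, hexp1]
    set w := (wvol (psi θ ρ) Q)⁻¹ with hwdef
    set I := ∫⁻ x in Q.carrier, u x ^ q with hIdef
    set B := w * ∫⁻ x in Q.carrier, u x ^ (-(dualExp p)) with hBdef
    set C : Rd d → ℝ≥0∞ := fun x => w * ∫⁻ y in Q.carrier, K x y ^ dualExp p with hCdef
    have hM : w * (∫⁻ x in Q.carrier, C x ^ (q / dualExp p)) ≤ matApq ρ θ p q W := by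
      unfold matApq pairApq pairApqOf
      rw [if_neg hp]
      refine le_trans (le_of_eq ?_) (le_iSup _ Q)
      congr 1
      refine lintegral_congr fun x => ?_
      congr 2
      show w * (∫⁻ y in Q.carrier, K x y ^ dualExp p) = _
      rw [hwdef]
      congr 1
      refine lintegral_congr fun y => ?_
      exact ENNReal.ofReal_rpow_of_nonneg (opNorm_nonneg _) hp'.le
    have hxt : ∀ x, (W x).PosDef → u x ^ (-(dualExp p)) ≠ ⊤ := by
      intro x hx
      rw [ENNReal.rpow_neg]
      exact ENNReal.inv_ne_top.2 (ENNReal.rpow_pos ((hu0 x hx).bot_lt) (hut x)).ne'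
    have haeB : ∀ᵐ x : Rd d, B ≤ C x * u x ^ (-(dualExp p)) := by
      filter_upwards [hae] with x hx
      have hb : (∫⁻ y in Q.carrier, u y ^ (-(dualExp p))) ≤
          (∫⁻ y in Q.carrier, K x y ^ dualExp p) * u x ^ (-(dualExp p)) := by
        rw [← lintegral_mul_const' _ _ (hxt x hx)]
        refine lintegral_mono_ae ?_
        filter_upwards [ae_restrict_of_ae hae] with y hy
        have h2 : u x * (u y)⁻¹ ≤ K x y := by
          calc u x * (u y)⁻¹ ≤ (K x y * u y) * (u y)⁻¹ :=
                mul_le_mul_left (hkey x y hy) _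
            _ = K x y * (u y * (u y)⁻¹) := by ring
            _ = K x y := by rw [ENNReal.mul_inv_cancel (hu0 y hy) (hut y), mul_one]
        have h1 : (u y)⁻¹ ≤ (u x)⁻¹ * K x y := by
          calc (u y)⁻¹ = (u x)⁻¹ * (u x * (u y)⁻¹) := by
                rw [← mul_assoc, ENNReal.inv_mul_cancel (hu0 x hx) (hut x), one_mul]
            _ ≤ (u x)⁻¹ * K x y := mul_le_mul_right h2 _
        calc u y ^ (-(dualExp p)) = ((u y)⁻¹) ^ dualExp p := by
              rw [ENNReal.inv_rpow, ← ENNReal.rpow_neg]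
          _ ≤ ((u x)⁻¹ * K x y) ^ dualExp p := ENNReal.rpow_le_rpow h1 hp'.le
          _ = ((u x)⁻¹) ^ dualExp p * K x y ^ dualExp p :=
              ENNReal.mul_rpow_of_nonneg _ _ hp'.le
          _ = K x y ^ dualExp p * u x ^ (-(dualExp p)) := by
              rw [ENNReal.inv_rpow, ← ENNReal.rpow_neg, mul_comm]
      calc B ≤ w * ((∫⁻ y in Q.carrier, K x y ^ dualExp p) * u x ^ (-(dualExp p))) := by
            rw [hBdef]; exact mul_le_mul_right hb w
        _ = C x * u x ^ (-(dualExp p)) := by rw [hCdef]; ring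
    by_cases hB : B = ⊤
    · by_cases hA : w * I = 0
      · rw [hA, zero_mul]
        exact zero_le
      · exfalso
        have hmul : w ≠ 0 ∧ I ≠ 0 := by
          constructor <;> intro h <;> apply hA
          · rw [h, zero_mul]
          · rw [h, mul_zero]
        have hQ0 : volume Q.carrier ≠ 0 := by
          intro h
          apply hmul.2
          rw [hIdef, Measure.restrict_eq_zero.mpr h, lintegral_zero_measure]
        have hCae : ∀ᵐ x : Rd d, C x ^ (q / dualExp p) = ⊤ := by
          filter_upwards [hae, haeB] with x hx hBx
          have hCt : C x = ⊤ := by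
            by_contra hCt
            exact (ENNReal.mul_ne_top hCt (hxt x hx))
              (top_le_iff.1 (hB ▸ hBx))
          rw [hCt]
          exact ENNReal.top_rpow_of_pos hqp'
        have hint : (∫⁻ x in Q.carrier, C x ^ (q / dualExp p)) = ⊤ := by
          rw [lintegral_congr_ae (ae_restrict_of_ae hCae), lintegral_const,
            Measure.restrict_apply_univ]
          exact ENNReal.top_mul hQ0
        have htop : (⊤:ℝ≥0∞) ≤ matApq ρ θ p q W := by
          refine le_trans (le_of_eq ?_) hM
          rw [hint, ENNReal.mul_top hmul.1]
        exact lt_irrefl ⊤ (lt_of_le_of_lt htop hfin)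
    · have hBq : B ^ (q / dualExp p) ≠ ⊤ := ENNReal.rpow_ne_top_of_nonneg hqp'.le hB
      calc w * I * B ^ (q / dualExp p)
          = w * (∫⁻ x in Q.carrier, u x ^ q * B ^ (q / dualExp p)) := by
            rw [lintegral_mul_const' _ _ hBq, mul_assoc, hIdef]
        _ ≤ w * (∫⁻ x in Q.carrier, C x ^ (q / dualExp p)) := by
            refine mul_le_mul_right (lintegral_mono_ae ?_) w
            filter_upwards [ae_restrict_of_ae hae, ae_restrict_of_ae haeB] with x hx hBx
            have hinv : u x ^ q * u x ^ (-q) = 1 := by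
              rw [ENNReal.rpow_neg, ENNReal.mul_inv_cancel
                (ENNReal.rpow_pos ((hu0 x hx).bot_lt) (hut x)).ne'
                (ENNReal.rpow_ne_top_of_nonneg hq0.le (hut x))]
            calc u x ^ q * B ^ (q / dualExp p)
                ≤ u x ^ q * (C x * u x ^ (-(dualExp p))) ^ (q / dualExp p) :=
                  mul_le_mul_right (ENNReal.rpow_le_rpow hBx hqp'.le) _
              _ = u x ^ q * (C x ^ (q / dualExp p) * (u x ^ (-(dualExp p))) ^ (q / dualExp p)) := by
                  rw [ENNReal.mul_rpow_of_nonneg _ _ hqp'.le]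
              _ = u x ^ q * (C x ^ (q / dualExp p) * u x ^ (-q)) := by
                  rw [← ENNReal.rpow_mul, hexp2]
              _ = C x ^ (q / dualExp p) * (u x ^ q * u x ^ (-q)) := by ring
              _ = C x ^ (q / dualExp p) := by rw [hinv, mul_one]
        _ ≤ matApq ρ θ p q W := hM
end
end

section
/- Let d ≥ 1, θ > 0, 1 ≤ p ≤ q < ∞, and let ρ be a critical radius function. Then for every matrix weight W: (i) [W]_{𝒜_{p,q}^{ρ,θ}} ≤ [W]_{Ã_{p,q}^{ρ,θ}}; (ii) there is a constant C (independent of W) such that [W]_{Ã_{p,q}^{ρ,3θ}} ≤ C [W]_{𝒜_{p,q}^{ρ,θ}}; consequently ⋃_{θ>0} Ã_{p,q}^{ρ,θ} = ⋃_{θ>0} 𝒜_{p,q}^{ρ,θ}. -/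
open MeasureTheory ENNReal
open scoped ComplexOrder

noncomputable section

open Paper

namespace Aux
open Paper

variable {d n : ℕ} {ρ : Rd d → ℝ}

lemma center_mem (Q : Cube d) : Q.center ∈ Q.carrier := by
  intro i
  have := Q.side_pos
  constructor <;> dsimp <;> linarith

lemma dist_le_of_mem (hd : 1 ≤ d) {Q : Cube d} {x y : Rd d}
    (hx : x ∈ Q.carrier) (hy : y ∈ Q.carrier) : dist x y ≤ d * Q.side := by
  have hs := Q.side_pos
  have hd1 : (1 : ℝ) ≤ d := by exact_mod_cast hd
  have h0 : (0 : ℝ) ≤ d * Q.side := by positivity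
  rw [EuclideanSpace.dist_eq]
  have key : ∀ i, dist (x i) (y i) ^ 2 ≤ Q.side ^ 2 := by
    intro i
    have hxi := hx i; have hyi := hy i
    have habs : |x i - y i| ≤ Q.side := by
      rw [abs_sub_le_iff]; constructor <;> linarith [hxi.1, hxi.2, hyi.1, hyi.2]
    have h2 := abs_nonneg (x i - y i)
    calc dist (x i) (y i) ^ 2 = |x i - y i| ^ 2 := by rw [Real.dist_eq]
      _ ≤ Q.side ^ 2 := by nlinarith
  have hsum : ∑ i, dist (x i) (y i) ^ 2 ≤ (d * Q.side) ^ 2 := by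
    calc ∑ i, dist (x i) (y i) ^ 2 ≤ ∑ _i : Fin d, Q.side ^ 2 :=
          Finset.sum_le_sum fun i _ => key i
      _ = d * Q.side ^ 2 := by simp [Finset.sum_const, nsmul_eq_mul]
      _ ≤ (d * Q.side) ^ 2 := by nlinarith
  calc Real.sqrt (∑ i, dist (x i) (y i) ^ 2) ≤ Real.sqrt ((d * Q.side) ^ 2) :=
        Real.sqrt_le_sqrt hsum
    _ = d * Q.side := Real.sqrt_sq h0

lemma rhoSup_bddAbove (hρ : IsCriticalRadius ρ) (hd : 1 ≤ d) (Q : Cube d) :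
    BddAbove (ρ '' Q.carrier) := by
  obtain ⟨-, hpos, C₀, N₀, hC₀, hN₀, hcr⟩ := hρ
  refine ⟨C₀ * ρ Q.center * (1 + d * Q.side / ρ Q.center) ^ (N₀ / (N₀ + 1)), ?_⟩
  rintro - ⟨y, hy, rfl⟩
  refine (hcr Q.center y).2.trans ?_
  have hpc := hpos Q.center
  have hdist : dist Q.center y ≤ d * Q.side := dist_le_of_mem hd (center_mem Q) hy
  have hdist0 := dist_nonneg (x := Q.center) (y := y)
  have hb1 : (0 : ℝ) ≤ 1 + dist Q.center y / ρ Q.center := by positivity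
  have hrpow : (1 + dist Q.center y / ρ Q.center) ^ (N₀ / (N₀ + 1))
      ≤ (1 + d * Q.side / ρ Q.center) ^ (N₀ / (N₀ + 1)) := by
    refine Real.rpow_le_rpow hb1 (by gcongr) (by positivity)
  have hCp : (0 : ℝ) ≤ C₀ * ρ Q.center := by positivity
  exact mul_le_mul_of_nonneg_left hrpow hCp

lemma rho_center_le_rhoSup (hρ : IsCriticalRadius ρ) (hd : 1 ≤ d) (Q : Cube d) :
    ρ Q.center ≤ rhoSup ρ Q :=
  le_csSup (rhoSup_bddAbove hρ hd Q) ⟨Q.center, center_mem Q, rfl⟩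

lemma rhoSup_pos (hρ : IsCriticalRadius ρ) (hd : 1 ≤ d) (Q : Cube d) : 0 < rhoSup ρ Q :=
  lt_of_lt_of_le (hρ.2.1 Q.center) (rho_center_le_rhoSup hρ hd Q)

lemma exists_near_rhoSup (hρ : IsCriticalRadius ρ) (hd : 1 ≤ d) (Q : Cube d) :
    ∃ x ∈ Q.carrier, rhoSup ρ Q / 2 < ρ x := by
  have hne : (ρ '' Q.carrier).Nonempty := ⟨ρ Q.center, Q.center, center_mem Q, rfl⟩
  have hlt : rhoSup ρ Q / 2 < sSup (ρ '' Q.carrier) := by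
    have h := rhoSup_pos hρ hd Q
    have h2 : rhoSup ρ Q / 2 < rhoSup ρ Q := by linarith
    exact h2
  obtain ⟨b, ⟨x, hx, rfl⟩, hb⟩ := exists_lt_of_lt_csSup hne hlt
  exact ⟨x, hx, hb⟩

lemma vol_eq (Q : Cube d) : Q.vol = ENNReal.ofReal (Q.side ^ d) := by
  have hc : Q.carrier = (MeasurableEquiv.toLp 2 (Fin d → ℝ)).symm ⁻¹'
      (Set.univ.pi fun i => Set.Ico (Q.center i - Q.side / 2) (Q.center i + Q.side / 2)) := by
    ext y
    simp only [Cube.carrier, Set.mem_setOf_eq, Set.mem_preimage, Set.mem_univ_pi, Set.mem_Ico]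
    exact Iff.rfl
  rw [Cube.vol, hc,
    (EuclideanSpace.volume_preserving_symm_measurableEquiv_toLp (Fin d)).measure_preimage
      ((MeasurableSet.univ_pi fun i => measurableSet_Ico).nullMeasurableSet),
    volume_pi_pi]
  have h1 : ∀ i : Fin d, volume (Set.Ico (Q.center i - Q.side / 2) (Q.center i + Q.side / 2))
      = ENNReal.ofReal Q.side := by
    intro i; rw [Real.volume_Ico]; congr 1; ring
  simp only [h1, Finset.prod_const, Finset.card_univ, Fintype.card_fin]
  rw [← ENNReal.ofReal_pow Q.side_pos.le]

lemma psiT_le_psi (hρ : IsCriticalRadius ρ) (hd : 1 ≤ d) {θ : ℝ} (hθ : 0 ≤ θ) (Q : Cube d) :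
    psiT θ ρ Q ≤ psi θ ρ Q := by
  have h1 := rho_center_le_rhoSup hρ hd Q
  have h2 := rhoSup_pos hρ hd Q
  have h3 := hρ.2.1 Q.center
  have hs := Q.side_pos
  refine Real.rpow_le_rpow (by positivity) ?_ hθ
  gcongr

lemma wvol_inv_le (hρ : IsCriticalRadius ρ) (hd : 1 ≤ d) {θ : ℝ} (hθ : 0 ≤ θ) (Q : Cube d) :
    (wvol (psi θ ρ) Q)⁻¹ ≤ (wvol (psiT θ ρ) Q)⁻¹ :=
  ENNReal.inv_le_inv'
    (mul_le_mul_left (ENNReal.ofReal_le_ofReal (psiT_le_psi hρ hd hθ Q)) _)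

lemma part_i (hd : 1 ≤ d) {p q : ℝ} (hp1 : 1 ≤ p) (hpq : p ≤ q)
    (hρ : IsCriticalRadius ρ) {θ : ℝ} (hθ : 0 ≤ θ) (W : Rd d → Mat n) :
    matApq ρ θ p q W ≤ matApqT ρ θ p q W := by
  have hinv := fun Q : Cube d => wvol_inv_le hρ hd hθ Q
  have hr : 0 ≤ q / dualExp p :=
    div_nonneg (by linarith) (div_nonneg (by linarith) (by linarith))
  unfold matApq matApqT pairApq pairApqOf
  by_cases hp : p = 1
  · simp only [if_pos hp]
    refine iSup_mono fun Q => essSup_mono_ae (Filter.Eventually.of_forall fun y => ?_)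
    exact mul_le_mul' (hinv Q) le_rfl
  · simp only [if_neg hp]
    refine iSup_mono fun Q => mul_le_mul' (hinv Q) (lintegral_mono fun x => ?_)
    exact ENNReal.rpow_le_rpow (mul_le_mul' (hinv Q) le_rfl) hr

lemma key_cube (hd : 1 ≤ d) (hρ : IsCriticalRadius ρ) {θ : ℝ} (hθ : 0 < θ) (Q : Cube d) :
    ∃ Q' : Cube d, Q.carrier ⊆ Q'.carrier ∧
      wvol (psi θ ρ) Q' ≤ ENNReal.ofReal (3 ^ d * 6 ^ θ) * wvol (psiT (3 * θ) ρ) Q := by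
  obtain ⟨z, hz, hzρ⟩ := exists_near_rhoSup hρ hd Q
  have hs := Q.side_pos
  refine ⟨⟨z, 3 * Q.side, by linarith⟩, ?_, ?_⟩
  · intro y hy i
    have h1 := hy i; have h2 := hz i
    constructor
    · show z i - 3 * Q.side / 2 ≤ y i
      linarith [h1.1, h2.2]
    · show y i < z i + 3 * Q.side / 2
      linarith [h1.2, h2.1]
  · have hR := rhoSup_pos hρ hd Q
    have hz0 : 0 < ρ z := hρ.2.1 z
    have hLR : (0:ℝ) ≤ Q.side / rhoSup ρ Q := by positivity
    have hψ'0 : (0:ℝ) ≤ 1 + 3 * Q.side / ρ z := by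
      have := div_nonneg (by linarith : (0:ℝ) ≤ 3 * Q.side) hz0.le
      linarith
    have hψt0 : (0:ℝ) ≤ 1 + Q.side / rhoSup ρ Q := by linarith
    simp only [wvol, vol_eq, psi, psiT]
    rw [← ENNReal.ofReal_mul (Real.rpow_nonneg hψ'0 θ),
      ← ENNReal.ofReal_mul (Real.rpow_nonneg hψt0 (3 * θ)),
      ← ENNReal.ofReal_mul (by positivity)]
    apply ENNReal.ofReal_le_ofReal
    show (1 + 3 * Q.side / ρ z) ^ θ * (3 * Q.side) ^ d
        ≤ 3 ^ d * 6 ^ θ * ((1 + Q.side / rhoSup ρ Q) ^ (3 * θ) * Q.side ^ d)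
    have h6 : 1 + 3 * Q.side / ρ z ≤ 6 * (1 + Q.side / rhoSup ρ Q) := by
      have hdiv : 3 * Q.side / ρ z ≤ 6 * Q.side / rhoSup ρ Q := by
        rw [div_le_div_iff₀ hz0 hR]; nlinarith
      have h6' : 6 * Q.side / rhoSup ρ Q = 6 * (Q.side / rhoSup ρ Q) := by ring
      rw [h6'] at hdiv
      linarith
    have hψle : (1 + 3 * Q.side / ρ z) ^ θ
        ≤ 6 ^ θ * (1 + Q.side / rhoSup ρ Q) ^ (3 * θ) := by
      calc (1 + 3 * Q.side / ρ z) ^ θ ≤ (6 * (1 + Q.side / rhoSup ρ Q)) ^ θ :=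
            Real.rpow_le_rpow (by positivity) h6 hθ.le
        _ = 6 ^ θ * (1 + Q.side / rhoSup ρ Q) ^ θ :=
            Real.mul_rpow (by norm_num) (by positivity)
        _ ≤ 6 ^ θ * (1 + Q.side / rhoSup ρ Q) ^ (3 * θ) := by
            have : (1 + Q.side / rhoSup ρ Q) ^ θ ≤ (1 + Q.side / rhoSup ρ Q) ^ (3 * θ) :=
              Real.rpow_le_rpow_of_exponent_le (by linarith) (by linarith)
            have h6p : (0:ℝ) ≤ 6 ^ θ := Real.rpow_nonneg (by norm_num) θ
            exact mul_le_mul_of_nonneg_left this h6p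
    calc (1 + 3 * Q.side / ρ z) ^ θ * (3 * Q.side) ^ d
        ≤ (6 ^ θ * (1 + Q.side / rhoSup ρ Q) ^ (3 * θ)) * (3 * Q.side) ^ d :=
          mul_le_mul_of_nonneg_right hψle (by positivity)
      _ = 3 ^ d * 6 ^ θ * ((1 + Q.side / rhoSup ρ Q) ^ (3 * θ) * Q.side ^ d) := by
          rw [mul_pow]; ring

lemma part_ii (hd : 1 ≤ d) {p q : ℝ} (hp1 : 1 ≤ p) (hpq : p ≤ q)
    (hρ : IsCriticalRadius ρ) {θ : ℝ} (hθ : 0 < θ) :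
    ∃ C : ℝ, 0 < C ∧ ∀ W : Rd d → Mat n,
      matApqT ρ (3 * θ) p q W ≤ ENNReal.ofReal C * matApq ρ θ p q W := by
  have hK₀ : (0 : ℝ) < 3 ^ d * 6 ^ θ := by positivity
  set K : ℝ≥0∞ := ENNReal.ofReal (3 ^ d * 6 ^ θ) with hKdef
  have hK0 : K ≠ 0 := by
    simp only [hKdef, ne_eq, ENNReal.ofReal_eq_zero, not_le]
    exact hK₀
  have hKtop : K ≠ ⊤ := ENNReal.ofReal_ne_top
  have hr : 0 ≤ q / dualExp p :=
    div_nonneg (by linarith) (div_nonneg (by linarith) (by linarith))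
  have hinv2 : ∀ Q Q' : Cube d,
      wvol (psi θ ρ) Q' ≤ K * wvol (psiT (3 * θ) ρ) Q →
      (wvol (psiT (3 * θ) ρ) Q)⁻¹ ≤ K * (wvol (psi θ ρ) Q')⁻¹ := by
    intro Q Q' hwv
    have h1 : (K * wvol (psiT (3 * θ) ρ) Q)⁻¹ ≤ (wvol (psi θ ρ) Q')⁻¹ :=
      ENNReal.inv_le_inv' hwv
    calc (wvol (psiT (3 * θ) ρ) Q)⁻¹
        = K * (K * wvol (psiT (3 * θ) ρ) Q)⁻¹ := by
          rw [ENNReal.mul_inv (Or.inl hK0) (Or.inl hKtop), ← mul_assoc,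
            ENNReal.mul_inv_cancel hK0 hKtop, one_mul]
      _ ≤ K * (wvol (psi θ ρ) Q')⁻¹ := mul_le_mul' le_rfl h1
  by_cases hp : p = 1
  · refine ⟨3 ^ d * 6 ^ θ, hK₀, fun W => ?_⟩
    unfold matApqT matApq pairApq pairApqOf
    simp only [if_pos hp]
    refine iSup_le fun Q => ?_
    obtain ⟨Q', hsub, hwv⟩ := key_cube hd hρ hθ Q
    have hi := hinv2 Q Q' hwv
    have step1 : essSup (fun y => (wvol (psiT (3 * θ) ρ) Q)⁻¹ *
          ∫⁻ x in Q.carrier, ENNReal.ofReal (opNorm (UV q W W x y) ^ q))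
          (volume.restrict Q.carrier)
        ≤ K * essSup (fun y => (wvol (psi θ ρ) Q')⁻¹ *
          ∫⁻ x in Q'.carrier, ENNReal.ofReal (opNorm (UV q W W x y) ^ q))
          (volume.restrict Q'.carrier) := by
      rw [← ENNReal.essSup_const_mul]
      refine le_trans (essSup_mono_ae (Filter.Eventually.of_forall fun y => ?_))
        (essSup_mono_measure
          (Measure.absolutelyContinuous_of_le (Measure.restrict_mono hsub le_rfl)))
      rw [← mul_assoc]
      exact mul_le_mul' hi (lintegral_mono_set hsub)
    exact step1.trans (mul_le_mul' le_rfl (le_iSup (fun Q : Cube d =>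
      essSup (fun y => (wvol (psi θ ρ) Q)⁻¹ *
        ∫⁻ x in Q.carrier, ENNReal.ofReal (opNorm (UV q W W x y) ^ q))
        (volume.restrict Q.carrier)) Q'))
  · refine ⟨(3 ^ d * 6 ^ θ) ^ (1 + q / dualExp p), by positivity, fun W => ?_⟩
    have hCK : ENNReal.ofReal ((3 ^ d * 6 ^ θ) ^ (1 + q / dualExp p))
        = K ^ (1 + q / dualExp p) := (ENNReal.ofReal_rpow_of_pos hK₀).symm
    rw [hCK]
    unfold matApqT matApq pairApq pairApqOf
    simp only [if_neg hp]
    refine iSup_le fun Q => ?_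
    obtain ⟨Q', hsub, hwv⟩ := key_cube hd hρ hθ Q
    have hi := hinv2 Q Q' hwv
    have hKr : K ^ (q / dualExp p) ≠ ⊤ := ENNReal.rpow_ne_top_of_nonneg hr hKtop
    have step1 : ∀ x : Rd d,
        ((wvol (psiT (3 * θ) ρ) Q)⁻¹ *
          ∫⁻ y in Q.carrier, ENNReal.ofReal (opNorm (UV q W W x y) ^ dualExp p))
            ^ (q / dualExp p)
        ≤ K ^ (q / dualExp p) * ((wvol (psi θ ρ) Q')⁻¹ *
          ∫⁻ y in Q'.carrier, ENNReal.ofReal (opNorm (UV q W W x y) ^ dualExp p))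
            ^ (q / dualExp p) := by
      intro x
      rw [← ENNReal.mul_rpow_of_nonneg _ _ hr]
      refine ENNReal.rpow_le_rpow ?_ hr
      rw [← mul_assoc]
      exact mul_le_mul' hi (lintegral_mono_set hsub)
    have hKK : K * K ^ (q / dualExp p) = K ^ (1 + q / dualExp p) := by
      rw [ENNReal.rpow_add _ _ hK0 hKtop, ENNReal.rpow_one]
    calc (wvol (psiT (3 * θ) ρ) Q)⁻¹ * ∫⁻ x in Q.carrier,
          ((wvol (psiT (3 * θ) ρ) Q)⁻¹ *
            ∫⁻ y in Q.carrier, ENNReal.ofReal (opNorm (UV q W W x y) ^ dualExp p))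
              ^ (q / dualExp p)
        ≤ (K * (wvol (psi θ ρ) Q')⁻¹) * ∫⁻ x in Q'.carrier,
            K ^ (q / dualExp p) * ((wvol (psi θ ρ) Q')⁻¹ *
              ∫⁻ y in Q'.carrier, ENNReal.ofReal (opNorm (UV q W W x y) ^ dualExp p))
                ^ (q / dualExp p) :=
          mul_le_mul' hi ((lintegral_mono step1).trans (lintegral_mono_set hsub))
      _ = (K * K ^ (q / dualExp p)) * ((wvol (psi θ ρ) Q')⁻¹ * ∫⁻ x in Q'.carrier,
            ((wvol (psi θ ρ) Q')⁻¹ *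
              ∫⁻ y in Q'.carrier, ENNReal.ofReal (opNorm (UV q W W x y) ^ dualExp p))
                ^ (q / dualExp p)) := by
          rw [lintegral_const_mul' _ _ hKr]; ring
      _ ≤ K ^ (1 + q / dualExp p) * ⨆ Q'' : Cube d,
            ((wvol (psi θ ρ) Q'')⁻¹ * ∫⁻ x in Q''.carrier,
              ((wvol (psi θ ρ) Q'')⁻¹ *
                ∫⁻ y in Q''.carrier, ENNReal.ofReal (opNorm (UV q W W x y) ^ dualExp p))
                  ^ (q / dualExp p)) := by
          rw [hKK]
          exact mul_le_mul' le_rfl (le_iSup (fun Q'' : Cube d =>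
            (wvol (psi θ ρ) Q'')⁻¹ * ∫⁻ x in Q''.carrier,
              ((wvol (psi θ ρ) Q'')⁻¹ *
                ∫⁻ y in Q''.carrier, ENNReal.ofReal (opNorm (UV q W W x y) ^ dualExp p))
                  ^ (q / dualExp p)) Q')

end Aux

/-- comparison of the classes `𝒜_{p,q}^{ρ,θ}` and `Ã_{p,q}^{ρ,θ}`. -/
theorem statement_12 (d n : ℕ) (hd : 1 ≤ d) (p q : ℝ) (hp1 : 1 ≤ p) (hpq : p ≤ q)
    (ρ : Rd d → ℝ) (hρ : IsCriticalRadius ρ) (θ : ℝ) (hθ : 0 < θ) :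
    (∀ W : Rd d → Mat n, IsMatrixWeight W →
      matApq ρ θ p q W ≤ matApqT ρ θ p q W) ∧
    (∃ C : ℝ, 0 < C ∧ ∀ W : Rd d → Mat n, IsMatrixWeight W →
      matApqT ρ (3*θ) p q W ≤ ENNReal.ofReal C * matApq ρ θ p q W) ∧
    (∀ W : Rd d → Mat n, IsMatrixWeight W →
      ((∃ θ' : ℝ, 0 < θ' ∧ matApqT ρ θ' p q W < ⊤) ↔
        (∃ θ' : ℝ, 0 < θ' ∧ matApq ρ θ' p q W < ⊤))) := by
  refine ⟨fun W _ => Aux.part_i hd hp1 hpq hρ hθ.le W, ?_, fun W _ => ?_⟩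
  · obtain ⟨C, hC, h⟩ := Aux.part_ii (n := n) hd hp1 hpq hρ hθ
    exact ⟨C, hC, fun W _ => h W⟩
  · constructor
    · rintro ⟨θ', hθ', h⟩
      exact ⟨θ', hθ', lt_of_le_of_lt (Aux.part_i hd hp1 hpq hρ hθ'.le W) h⟩
    · rintro ⟨θ', hθ', h⟩
      obtain ⟨C, hC, hh⟩ := Aux.part_ii (n := n) hd hp1 hpq hρ hθ'
      exact ⟨3 * θ', by linarith, lt_of_le_of_lt (hh W)
        (ENNReal.mul_lt_top ENNReal.ofReal_lt_top h)⟩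
end
end

section
/- Let d ≥ 1, θ ≥ 0, 0 ≤ α < d, 1 < q < ∞, let ρ be a critical radius function, and let U, V be n×n matrix weights. Then there is a constant C such that for every ℂ^n-valued f⃗ and every x ∈ ℝ^d: M_{U,V,ψ_θ,α}f⃗(x) ≤ C ∑_{t∈{0,1/3}^d} M_{U,V,ψ̃_θ,α}^{𝒟^t}f⃗(x), where M_{U,V,ψ_θ,α}f⃗(x) := sup_{Q∋x}(ψ_θ(Q)|Q|)^{α/d−1}∫_Q|U(x)^{1/q}V(y)^{−1/q}f⃗(y)|dy (sup over all cubes containing x) and M_{U,V,ψ̃_θ,α}^{𝒟^t}f⃗(x) := sup_{Q∈𝒟^t, Q∋x}(ψ̃_θ(Q)|Q|)^{α/d−1}∫_Q|U(x)^{1/q}V(y)^{−1/q}f⃗(y)|dy. -/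
open MeasureTheory ENNReal
open scoped ComplexOrder

noncomputable section

open Paper


section Aux

open Set

variable {d : ℕ}

lemma Paper.Cube.center_mem (Q : Cube d) : Q.center ∈ Q.carrier := by
  intro i
  have := Q.side_pos
  constructor <;> linarith

lemma Paper.Cube.vol_eq (Q : Cube d) : Q.vol = ENNReal.ofReal (Q.side ^ d) := by
  have hcar : Q.carrier = (MeasurableEquiv.toLp 2 (Fin d → ℝ)).symm ⁻¹'
      (Set.univ.pi fun i => Set.Ico (Q.center i - Q.side/2) (Q.center i + Q.side/2)) := by
    ext y
    simp [Cube.carrier, Set.mem_pi, Set.mem_Ico, MeasurableEquiv.toLp]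
    exact Iff.rfl
  have hms : MeasurableSet (Set.univ.pi fun i : Fin d =>
      Set.Ico (Q.center i - Q.side/2) (Q.center i + Q.side/2)) :=
    MeasurableSet.univ_pi fun i => measurableSet_Ico
  have := (EuclideanSpace.volume_preserving_symm_measurableEquiv_toLp (Fin d)).measure_preimage
    hms.nullMeasurableSet
  rw [Cube.vol, hcar, this, volume_pi_pi]
  have hside : ∀ c : ℝ, (c + Q.side/2) - (c - Q.side/2) = Q.side := fun c => by ring
  simp only [Real.volume_Ico, hside]
  rw [Finset.prod_const, Finset.card_univ, Fintype.card_fin,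
    ← ENNReal.ofReal_pow Q.side_pos.le]

lemma exists_zpow_between {s : ℝ} (hs : 0 < s) :
    ∃ j : ℤ, 3*s ≤ (2:ℝ)^j ∧ (2:ℝ)^j < 6*s := by
  set r := Real.logb 2 (3*s) with hr
  refine ⟨⌈r⌉, ?_, ?_⟩
  · have h1 : (2:ℝ)^(r) ≤ (2:ℝ)^((⌈r⌉:ℤ):ℝ) :=
      Real.rpow_le_rpow_of_exponent_le one_le_two (Int.le_ceil r)
    rw [Real.rpow_logb two_pos (by norm_num) (by linarith)] at h1
    rwa [Real.rpow_intCast] at h1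
  · have h2 : (2:ℝ)^((⌈r⌉:ℤ):ℝ) < (2:ℝ)^(r+1) :=
      Real.rpow_lt_rpow_of_exponent_lt one_lt_two (Int.ceil_lt_add_one r)
    rw [Real.rpow_add two_pos, Real.rpow_logb two_pos (by norm_num) (by linarith),
      Real.rpow_one, Real.rpow_intCast] at h2
    linarith

lemma oneDim {L a s : ℝ} (hs : 0 < s) (hL : 3*s ≤ L) {σ : ℝ} (hσ : σ = 1 ∨ σ = -1) :
    ∃ (b : Bool) (m : ℤ),
      L*((m:ℝ) + σ*(if b then (1/3:ℝ) else 0)) ≤ a ∧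
      a + s ≤ L*((m:ℝ) + σ*(if b then (1/3:ℝ) else 0) + 1) := by
  have hLpos : 0 < L := lt_of_lt_of_le (by linarith) hL
  set m₀ : ℤ := ⌊a / L⌋ with hm₀
  have hfl : L*(m₀:ℝ) ≤ a := by
    have h1 := Int.floor_le (a / L)
    have h2 : L * (m₀:ℝ) ≤ L * (a / L) := mul_le_mul_of_nonneg_left h1 hLpos.le
    have h3 : L * (a / L) = a := by field_simp
    linarith
  have hfl2 : a < L*((m₀:ℝ)+1) := by
    have h1 := Int.lt_floor_add_one (a / L)
    have h2 : L * (a / L) < L * ((m₀:ℝ)+1) := mul_lt_mul_of_pos_left h1 hLpos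
    have h3 : L * (a / L) = a := by field_simp
    linarith
  by_cases h1 : a + s ≤ L*((m₀:ℝ)+1)
  · exact ⟨false, m₀, by simpa using hfl, by simpa using h1⟩
  · push_neg at h1
    rcases hσ with h | h <;> subst h
    · refine ⟨true, m₀, ?_, ?_⟩ <;> simp only [if_true, one_mul]
      · have e : L*((m₀:ℝ) + 1/3) = L*(m₀:ℝ) + L/3 := by ring
        have e2 : L*((m₀:ℝ)+1) = L*(m₀:ℝ) + L := by ring
        rw [e]; rw [e2] at h1 hfl2; linarith
      · have e : L*((m₀:ℝ) + 1/3 + 1) = L*(m₀:ℝ) + L + L/3 := by ring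
        have e2 : L*((m₀:ℝ)+1) = L*(m₀:ℝ) + L := by ring
        rw [e]; rw [e2] at h1 hfl2; linarith
    · refine ⟨true, m₀ + 1, ?_, ?_⟩ <;> simp only [if_true]
      · have e : L*(((m₀+1:ℤ):ℝ) + (-1)*(1/3)) = L*(m₀:ℝ) + L - L/3 := by push_cast; ring
        have e2 : L*((m₀:ℝ)+1) = L*(m₀:ℝ) + L := by ring
        rw [e]; rw [e2] at h1 hfl2; linarith
      · have e : L*(((m₀+1:ℤ):ℝ) + (-1)*(1/3) + 1) = L*(m₀:ℝ) + L + 2*(L/3) := by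
          push_cast; ring
        have e2 : L*((m₀:ℝ)+1) = L*(m₀:ℝ) + L := by ring
        rw [e]; rw [e2] at h1 hfl2; linarith

/-- One-third trick: every cube is contained in a shifted dyadic cube of comparable size. -/
lemma exists_dyadic_containing (Q : Cube d) :
    ∃ (t : Fin d → Bool) (Q' : Cube d),
      Q' ∈ stdGrid d (boolParam d t) ∧ Q.carrier ⊆ Q'.carrier ∧
      3 * Q.side ≤ Q'.side ∧ Q'.side < 6 * Q.side := by
  obtain ⟨j, hj1, hj2⟩ := exists_zpow_between Q.side_pos
  set k : ℤ := -j with hk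
  set L : ℝ := (2:ℝ)^(-k) with hLdef
  have hLj : L = (2:ℝ)^j := by rw [hLdef, hk, neg_neg]
  have hL1 : 3 * Q.side ≤ L := by rw [hLj]; exact hj1
  have hL2 : L < 6 * Q.side := by rw [hLj]; exact hj2
  have hLpos : 0 < L := lt_of_lt_of_le (by have := Q.side_pos; linarith) hL1
  set σ : ℝ := (-1:ℝ)^k with hσdef
  have hσ : σ = 1 ∨ σ = -1 := by
    rcases Int.even_or_odd k with h | h
    · exact Or.inl (h.neg_one_zpow)
    · exact Or.inr (h.neg_one_zpow)
  have h1d := fun i : Fin d =>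
    oneDim (a := Q.center i - Q.side/2) Q.side_pos hL1 hσ
  choose b m hm1 hm2 using h1d
  refine ⟨b, ⟨(WithLp.equiv 2 (Fin d → ℝ)).symm
      (fun i => L*((m i:ℝ) + σ*(boolParam d b i) + 1/2)), L, hLpos⟩, ?_, ?_, hL1, hL2⟩
  · refine ⟨k, m, rfl, fun i => ?_⟩
    simp [WithLp.equiv_symm_apply, PiLp.toLp_apply, boolParam, hσdef, hLdef]
  · intro y hy i
    have hyi := hy i
    have hc : (WithLp.equiv 2 (Fin d → ℝ)).symm
        (fun i => L*((m i:ℝ) + σ*(boolParam d b i) + 1/2)) i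
        = L*((m i:ℝ) + σ*(boolParam d b i) + 1/2) := rfl
    have hbp : boolParam d b i = if b i then (1/3:ℝ) else 0 := rfl
    have h1 := hm1 i
    have h2 := hm2 i
    rw [hbp] at hc
    constructor
    · have e : L*((m i:ℝ) + σ*(if b i then (1/3:ℝ) else 0) + 1/2) - L/2
          = L*((m i:ℝ) + σ*(if b i then (1/3:ℝ) else 0)) := by ring
      simp only [hc, e]
      linarith [hyi.1]
    · have e : L*((m i:ℝ) + σ*(if b i then (1/3:ℝ) else 0) + 1/2) + L/2
          = L*((m i:ℝ) + σ*(if b i then (1/3:ℝ) else 0) + 1) := by ring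
      simp only [hc, e]
      linarith [hyi.2, h2]

lemma rpow_neg_le_aux {A B K : ℝ≥0∞} (hA0 : A ≠ 0) (hAt : A ≠ ⊤) (hB0 : B ≠ 0) (hBt : B ≠ ⊤)
    (hK : B ≤ K * A) {β : ℝ} (hβ : β ≤ 0) : A ^ β ≤ K ^ (-β) * B ^ β := by
  have hnn : 0 ≤ -β := neg_nonneg.2 hβ
  have h1 : B ^ (-β) ≤ K ^ (-β) * A ^ (-β) := by
    have ha : B ^ (-β) ≤ (K*A)^(-β) := ENNReal.rpow_le_rpow hK hnn
    have hb : (K*A)^(-β) = K^(-β) * A^(-β) := ENNReal.mul_rpow_of_nonneg _ _ hnn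
    rw [hb] at ha; exact ha
  have e1 : B^(-β) * B^β = 1 := by
    rw [← ENNReal.rpow_add _ _ hB0 hBt, neg_add_cancel, ENNReal.rpow_zero]
  have e2 : A^β * A^(-β) = 1 := by
    rw [← ENNReal.rpow_add _ _ hA0 hAt, add_neg_cancel, ENNReal.rpow_zero]
  have h2 : A^β * (B^(-β) * B^β) ≤ A^β * ((K^(-β) * A^(-β)) * B^β) := by gcongr
  have h3 : A^β * ((K^(-β) * A^(-β)) * B^β) = K^(-β) * ((A^β * A^(-β)) * B^β) := by ring
  rw [e1, mul_one] at h2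
  rw [h3, e2, one_mul] at h2
  exact h2

end Aux

/-- pointwise domination of `M_{U,V,ψ_θ,α}` by dyadic maximal operators. -/
theorem statement_14 (d n : ℕ) (hd : 1 ≤ d) (θ α q : ℝ)
    (hθ : 0 ≤ θ) (hα0 : 0 ≤ α) (hαd : α < d) (hq1 : 1 < q)
    (ρ : Rd d → ℝ) (hρ : IsCriticalRadius ρ) :
    ∃ C : ℝ, 0 < C ∧ ∀ U V : Rd d → Mat n, IsMatrixWeight U → IsMatrixWeight V →
      ∀ f : Rd d → Cn n, ∀ x : Rd d,
        MfracPair ρ θ α q U V f x ≤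
          ENNReal.ofReal C * ∑ t : Fin d → Bool,
            MfracPairD (stdGrid d (boolParam d t)) ρ θ α q U V f x := by

  obtain ⟨hmeas, hρpos, C₀, N₀, hC₀, hN₀, hcr⟩ := hρ
  refine ⟨6 ^ θ * 6 ^ d, by positivity, fun U V hU hV f x => ?_⟩
  set C : ℝ := 6 ^ θ * 6 ^ d with hC
  have hC1 : (1:ℝ) ≤ C := by
    have h1 : (1:ℝ) ≤ 6 ^ θ := Real.one_le_rpow (by norm_num) hθ
    have h2 : (1:ℝ) ≤ (6:ℝ) ^ d := one_le_pow₀ (by norm_num)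
    nlinarith
  refine iSup_le fun QP => ?_
  obtain ⟨Q, hxQ⟩ := QP
  obtain ⟨t, Q', hQ'grid, hsub, hside1, hside2⟩ := exists_dyadic_containing Q
  set s := Q.side with hs
  have hspos := Q.side_pos
  set L := Q'.side with hL
  have hLpos := Q'.side_pos
  set g := fun y : Rd d => ENNReal.ofReal ‖mulVecE (UV q U V x y) (f y)‖ with hg
  set β := α / (d:ℝ) - 1 with hβ
  have hdpos : (0:ℝ) < d := by exact_mod_cast hd
  have hd1 : (1:ℝ) ≤ (d:ℝ) := by exact_mod_cast hd
  have hβneg : β ≤ 0 := by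
    have : α / (d:ℝ) < 1 := (div_lt_one hdpos).2 hαd
    simp only [hβ]; linarith
  have hβ1 : -β ≤ 1 := by
    have : 0 ≤ α / (d:ℝ) := div_nonneg hα0 hdpos.le
    simp only [hβ]; linarith
  have hρc : 0 < ρ Q.center := hρpos _
  have hcmem : Q.center ∈ Q'.carrier := hsub (Q.center_mem)
  have hbdd : BddAbove (ρ '' Q'.carrier) := by
    refine ⟨C₀ * ρ Q'.center * (1 + (d:ℝ)*L / ρ Q'.center) ^ (N₀/(N₀+1)), ?_⟩
    rintro r ⟨y, hy, rfl⟩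
    have hρc' : 0 < ρ Q'.center := hρpos _
    have hdist : dist Q'.center y ≤ (d:ℝ) * L := by
      rw [EuclideanSpace.dist_eq]
      have hterm : ∀ i : Fin d, dist (Q'.center i) (y i) ^ 2 ≤ L ^ 2 := by
        intro i
        have hyi := hy i
        have habs : |Q'.center i - y i| ≤ L := by
          rw [abs_le]; constructor <;> [linarith [hyi.2]; linarith [hyi.1]]
        have hd2 : dist (Q'.center i) (y i) ≤ L := by rw [Real.dist_eq]; exact habs
        exact pow_le_pow_left₀ dist_nonneg hd2 2
      have hsum1 : (∑ i : Fin d, dist (Q'.center i) (y i) ^ 2) ≤ ∑ _i : Fin d, L ^ 2 :=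
        Finset.sum_le_sum fun i _ => hterm i
      have hsum2 : (∑ _i : Fin d, (L:ℝ) ^ 2) = (d:ℝ) * L ^ 2 := by
        rw [Finset.sum_const, Finset.card_univ, Fintype.card_fin, nsmul_eq_mul]
      have hsum : (∑ i : Fin d, dist (Q'.center i) (y i) ^ 2) ≤ ((d:ℝ) * L) ^ 2 := by
        rw [hsum2] at hsum1
        nlinarith [mul_nonneg (mul_nonneg (by linarith : (0:ℝ) ≤ (d:ℝ))
          (by linarith : (0:ℝ) ≤ (d:ℝ) - 1)) (sq_nonneg L)]
      have h5 : Real.sqrt (∑ i : Fin d, dist (Q'.center i) (y i) ^ 2)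
          ≤ Real.sqrt (((d:ℝ)*L)^2) := Real.sqrt_le_sqrt hsum
      rwa [Real.sqrt_sq (by positivity)] at h5
    have h := (hcr Q'.center y).2
    refine h.trans ?_
    have hmono : (1 + dist Q'.center y / ρ Q'.center) ^ (N₀/(N₀+1))
        ≤ (1 + (d:ℝ)*L / ρ Q'.center) ^ (N₀/(N₀+1)) := by
      apply Real.rpow_le_rpow (by positivity) (by gcongr) (by positivity)
    exact mul_le_mul_of_nonneg_left hmono (by positivity)
  have hρsup : ρ Q.center ≤ rhoSup ρ Q' := le_csSup hbdd ⟨Q.center, hcmem, rfl⟩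
  have hρsuppos : 0 < rhoSup ρ Q' := lt_of_lt_of_le hρc hρsup
  have hpsiQ : 0 < psi θ ρ Q := Real.rpow_pos_of_pos (by positivity) _
  have hpsiT : 0 < psiT θ ρ Q' := Real.rpow_pos_of_pos (by positivity) _
  have hpsile : psiT θ ρ Q' ≤ 6 ^ θ * psi θ ρ Q := by
    rw [psiT, psi, ← Real.mul_rpow (by norm_num) (by positivity)]
    apply Real.rpow_le_rpow (by positivity) ?_ hθ
    have h1 : L / rhoSup ρ Q' ≤ L / ρ Q.center := by gcongr
    have h2 : L / ρ Q.center ≤ 6 * s / ρ Q.center := by gcongr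
    have h3 : 6 * s / ρ Q.center = 6 * (s / ρ Q.center) := by ring
    have h4 : 0 ≤ s / ρ Q.center := by positivity
    have h5 : 1 + L / rhoSup ρ Q' ≤ 1 + 6 * (s / ρ Q.center) := by
      rw [← h3]; linarith [h1.trans h2]
    linarith
  set A := wvol (psi θ ρ) Q with hA
  set B := wvol (psiT θ ρ) Q' with hB
  have hA' : A = ENNReal.ofReal (psi θ ρ Q) * ENNReal.ofReal (s ^ d) := by
    rw [hA]; unfold wvol; rw [Q.vol_eq]
  have hB' : B = ENNReal.ofReal (psiT θ ρ Q') * ENNReal.ofReal (L ^ d) := by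
    rw [hB]; unfold wvol; rw [Q'.vol_eq]
  have hA0 : A ≠ 0 := by
    rw [hA']
    exact mul_ne_zero (by simp [ENNReal.ofReal_pos, hpsiQ])
      (by simp only [ne_eq, ENNReal.ofReal_eq_zero, not_le]; positivity)
  have hAt : A ≠ ⊤ := by
    rw [hA']; exact ENNReal.mul_ne_top ENNReal.ofReal_ne_top ENNReal.ofReal_ne_top
  have hB0 : B ≠ 0 := by
    rw [hB']
    exact mul_ne_zero (by simp [ENNReal.ofReal_pos, hpsiT])
      (by simp only [ne_eq, ENNReal.ofReal_eq_zero, not_le]; positivity)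
  have hBt : B ≠ ⊤ := by
    rw [hB']; exact ENNReal.mul_ne_top ENNReal.ofReal_ne_top ENNReal.ofReal_ne_top
  have hBKA : B ≤ ENNReal.ofReal C * A := by
    rw [hA', hB']
    have hle1 : ENNReal.ofReal (psiT θ ρ Q') ≤ ENNReal.ofReal (6 ^ θ * psi θ ρ Q) :=
      ENNReal.ofReal_le_ofReal hpsile
    have hle2 : ENNReal.ofReal (L ^ d) ≤ ENNReal.ofReal (6 ^ d * s ^ d) := by
      apply ENNReal.ofReal_le_ofReal
      have hp := pow_le_pow_left₀ hLpos.le hside2.le d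
      rw [mul_pow] at hp; exact hp
    have heq : ENNReal.ofReal ((6:ℝ) ^ θ * psi θ ρ Q) * ENNReal.ofReal ((6:ℝ) ^ d * s ^ d)
        = ENNReal.ofReal C * (ENNReal.ofReal (psi θ ρ Q) * ENNReal.ofReal (s ^ d)) := by
      rw [hC, ENNReal.ofReal_mul (by positivity), ENNReal.ofReal_mul (by positivity),
        ENNReal.ofReal_mul (by positivity)]
      ring
    exact le_trans (mul_le_mul' hle1 hle2) (le_of_eq heq)
  have hKey : A ^ β ≤ ENNReal.ofReal C * B ^ β := by
    have hmain := rpow_neg_le_aux hA0 hAt hB0 hBt hBKA hβneg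
    have h6 : (ENNReal.ofReal C) ^ (-β) ≤ ENNReal.ofReal C := by
      have h7 := ENNReal.rpow_le_rpow_of_exponent_le (x := ENNReal.ofReal C)
        (by simpa [ENNReal.one_le_ofReal] using hC1) hβ1
      rwa [ENNReal.rpow_one] at h7
    exact hmain.trans (mul_le_mul_left h6 _)
  have hint : (∫⁻ y in Q.carrier, g y) ≤ ∫⁻ y in Q'.carrier, g y :=
    lintegral_mono_set hsub
  have step1 : A ^ β * (∫⁻ y in Q.carrier, g y)
      ≤ (ENNReal.ofReal C * B ^ β) * ∫⁻ y in Q'.carrier, g y := mul_le_mul' hKey hint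
  have step2 : (ENNReal.ofReal C * B ^ β) * (∫⁻ y in Q'.carrier, g y)
      = ENNReal.ofReal C * (B ^ β * ∫⁻ y in Q'.carrier, g y) := by ring
  have step3 : B ^ β * (∫⁻ y in Q'.carrier, g y)
      ≤ MfracPairD (stdGrid d (boolParam d t)) ρ θ α q U V f x :=
    le_iSup (fun R : {R : Cube d // R ∈ stdGrid d (boolParam d t) ∧ x ∈ R.carrier} =>
      (wvol (psiT θ ρ) R.1) ^ (α / (d:ℝ) - 1) * ∫⁻ y in R.1.carrier, g y)
      ⟨Q', hQ'grid, hsub hxQ⟩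
  have step4 : MfracPairD (stdGrid d (boolParam d t)) ρ θ α q U V f x
      ≤ ∑ t' : Fin d → Bool, MfracPairD (stdGrid d (boolParam d t')) ρ θ α q U V f x :=
    Finset.single_le_sum
      (f := fun t' : Fin d → Bool => MfracPairD (stdGrid d (boolParam d t')) ρ θ α q U V f x)
      (fun i _ => zero_le) (Finset.mem_univ t)
  refine le_trans step1 ?_
  rw [step2]
  exact mul_le_mul_right (step3.trans step4) _
end
end

section
/- Let d ≥ 1, θ ≥ 0, 0 < α < d, 1 < p < q < ∞ with 1/p − 1/q > α/d, let ρ be a critical radius function, and let U, V be n×n matrix weights. Assume that M_{U,V,ψ_θ,α} is bounded from L^p(ℝ^d,ℂ^n) to L^q(ℝ^d,ℂ^n) and that |V^{1/q}|_op ∈ L^p_loc(ℝ^d). Then U(x) = 0 for almost every x ∈ ℝ^d. -/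
open MeasureTheory ENNReal
open scoped ComplexOrder

noncomputable section

open Paper

section AuxSection
open Matrix Paper

namespace Aux

variable {n : ℕ} {d : ℕ}

/-! ### Linear algebra -/

lemma sum_sq_eq (z : Fin n → ℂ) :
    ((∑ i, ‖z i‖ ^ 2 : ℝ) : ℂ) = star z ⬝ᵥ z := by
  rw [dotProduct]
  push_cast
  refine Finset.sum_congr rfl fun i _ => ?_
  rw [Pi.star_apply, Complex.star_def, mul_comm, Complex.mul_conj, Complex.normSq_eq_norm_sq]
  norm_cast

lemma sumsq_unitary {E : Mat n} (hE : Eᴴ * E = 1) (z : Fin n → ℂ) :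
    ∑ i, ‖(E *ᵥ z) i‖ ^ 2 = ∑ i, ‖z i‖ ^ 2 := by
  have h := sum_sq_eq (E *ᵥ z)
  rw [star_mulVec, Matrix.dotProduct_mulVec, Matrix.vecMul_vecMul, hE,
    Matrix.vecMul_one, ← sum_sq_eq z] at h
  exact_mod_cast h

lemma rpowMat_of_hermitian {A : Mat n} (hH : A.IsHermitian) (r : ℝ) :
    rpowMat A r = (hH.eigenvectorUnitary : Mat n) *
      Matrix.diagonal (fun i => ((hH.eigenvalues i ^ r : ℝ) : ℂ)) *
      (star (hH.eigenvectorUnitary : Mat n)) := by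
  rw [rpowMat, dif_pos hH]

lemma rpowMat_mul_rpowMat_neg {A : Mat n} (hA : A.PosDef) (r : ℝ) :
    rpowMat A r * rpowMat A (-r) = 1 := by
  have hH := hA.1
  set E := (hH.eigenvectorUnitary : Mat n) with hEdef
  have hE1 : star E * E = 1 := (Unitary.mem_iff.mp hH.eigenvectorUnitary.2).1
  have hE2 : E * star E = 1 := (Unitary.mem_iff.mp hH.eigenvectorUnitary.2).2
  set D1 := Matrix.diagonal (fun i => ((hH.eigenvalues i ^ r : ℝ) : ℂ)) with hD1
  set D2 := Matrix.diagonal (fun i => ((hH.eigenvalues i ^ (-r) : ℝ) : ℂ)) with hD2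
  have key : E * D1 * star E * (E * D2 * star E) = E * (D1 * D2) * star E := by
    calc E * D1 * star E * (E * D2 * star E) = E * D1 * (star E * E * (D2 * star E)) := by
          simp only [mul_assoc]
      _ = E * (D1 * D2) * star E := by rw [hE1, one_mul]; simp only [mul_assoc]
  rw [rpowMat_of_hermitian hH, rpowMat_of_hermitian hH, ← hD1, ← hD2, key, hD1, hD2,
    Matrix.diagonal_mul_diagonal]
  have : (fun i => ((hH.eigenvalues i ^ r : ℝ) : ℂ) * ((hH.eigenvalues i ^ (-r) : ℝ) : ℂ)) =
      fun _ => (1 : ℂ) := by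
    funext i
    rw [← Complex.ofReal_mul, ← Real.rpow_add (hA.eigenvalues_pos i)]
    norm_num
  rw [this, Matrix.diagonal_one, mul_one, hE2]

lemma norm_mulVecE_eq (A : Mat n) (v : Cn n) :
    ‖mulVecE A v‖ = Real.sqrt (∑ i, ‖(A *ᵥ (fun j => v j)) i‖ ^ 2) := by
  rw [EuclideanSpace.norm_eq]; rfl

lemma norm_coords (v : Cn n) : ‖v‖ = Real.sqrt (∑ i, ‖v i‖ ^ 2) :=
  EuclideanSpace.norm_eq v

lemma rpow_mulVecE_lower {A : Mat n} (hA : A.PosDef) {r : ℝ} (hr : 0 < r)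
    {c : ℝ} (hc : 0 ≤ c) (hle : ∀ i, c ≤ hA.1.eigenvalues i) (w : Cn n) :
    c ^ r * ‖w‖ ≤ ‖mulVecE (rpowMat A r) w‖ := by
  have hH := hA.1
  set E := (hH.eigenvectorUnitary : Mat n) with hEdef
  have hE1 : star E * E = 1 := (Unitary.mem_iff.mp hH.eigenvectorUnitary.2).1
  have hE2 : E * star E = 1 := (Unitary.mem_iff.mp hH.eigenvectorUnitary.2).2
  set z : Fin n → ℂ := fun j => w j with hz
  set u : Fin n → ℂ := (star E) *ᵥ z with hu
  have hmv : (rpowMat A r) *ᵥ z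
      = E *ᵥ ((Matrix.diagonal fun i => ((hH.eigenvalues i ^ r : ℝ) : ℂ)) *ᵥ u) := by
    rw [rpowMat_of_hermitian hH, ← hEdef, hu, Matrix.mulVec_mulVec, Matrix.mulVec_mulVec,
      mul_assoc]
  have hsum : ∑ i, ‖((rpowMat A r) *ᵥ z) i‖ ^ 2
      = ∑ i, ‖((Matrix.diagonal fun i => ((hH.eigenvalues i ^ r : ℝ) : ℂ)) *ᵥ u) i‖ ^ 2 := by
    rw [hmv]
    exact sumsq_unitary (by rw [← Matrix.star_eq_conjTranspose, hE1]) _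
  have hdiag : ∀ i, ‖((Matrix.diagonal fun i => ((hH.eigenvalues i ^ r : ℝ) : ℂ)) *ᵥ u) i‖ ^ 2
      = (hH.eigenvalues i ^ r) ^ 2 * ‖u i‖ ^ 2 := by
    intro i
    rw [Matrix.mulVec_diagonal, norm_mul, Complex.norm_real, Real.norm_eq_abs,
      abs_of_nonneg (Real.rpow_nonneg (le_trans hc (hle i)) r), mul_pow]
  have husum : ∑ i, ‖u i‖ ^ 2 = ∑ i, ‖z i‖ ^ 2 := by
    have : (star E)ᴴ * (star E) = 1 := by
      rw [← Matrix.star_eq_conjTranspose, star_star, hE2]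
    exact sumsq_unitary this z
  have hlow : (c ^ r) ^ 2 * (∑ i, ‖z i‖ ^ 2) ≤ ∑ i, ‖((rpowMat A r) *ᵥ z) i‖ ^ 2 := by
    rw [hsum, ← husum, Finset.mul_sum]
    refine Finset.sum_le_sum fun i _ => ?_
    rw [hdiag i]
    have h1 : c ^ r ≤ hH.eigenvalues i ^ r := Real.rpow_le_rpow hc (hle i) hr.le
    have h2 : (c ^ r) ^ 2 ≤ (hH.eigenvalues i ^ r) ^ 2 :=
      pow_le_pow_left₀ (Real.rpow_nonneg hc r) h1 2
    exact mul_le_mul_of_nonneg_right h2 (sq_nonneg _)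
  have hnorm : ‖mulVecE (rpowMat A r) w‖ = Real.sqrt (∑ i, ‖((rpowMat A r) *ᵥ z) i‖ ^ 2) :=
    norm_mulVecE_eq _ _
  rw [hnorm, norm_coords w]
  calc c ^ r * Real.sqrt (∑ i, ‖w i‖ ^ 2)
      = Real.sqrt ((c ^ r) ^ 2 * ∑ i, ‖w i‖ ^ 2) := by
        rw [Real.sqrt_mul (sq_nonneg _), Real.sqrt_sq (Real.rpow_nonneg hc r)]
    _ ≤ Real.sqrt (∑ i, ‖((rpowMat A r) *ᵥ z) i‖ ^ 2) := Real.sqrt_le_sqrt hlow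

/-- A measurable lower bound for the smallest eigenvalue. -/
def mfun (A : Mat n) : ℝ := Complex.re A.det / (Complex.re A.trace + 1) ^ (n - 1)

lemma re_det_eq {A : Mat n} (hA : A.PosDef) :
    Complex.re A.det = ∏ j, hA.1.eigenvalues j := by
  rw [hA.1.det_eq_prod_eigenvalues]
  norm_cast

lemma re_trace_eq {A : Mat n} (hA : A.PosDef) :
    Complex.re A.trace = ∑ j, hA.1.eigenvalues j := by
  have hE1 : star (hA.1.eigenvectorUnitary : Mat n) * (hA.1.eigenvectorUnitary : Mat n) = 1 :=
    (Unitary.mem_iff.mp hA.1.eigenvectorUnitary.2).1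
  conv_lhs => rw [hA.1.spectral_theorem, Unitary.conjStarAlgAut_apply]
  rw [mul_assoc, Matrix.trace_mul_comm, mul_assoc, hE1, mul_one, Matrix.trace_diagonal]
  rw [Complex.re_sum]
  exact Finset.sum_congr rfl fun j _ => rfl

lemma trace_add_one_pos {A : Mat n} (hA : A.PosDef) : 0 < Complex.re A.trace + 1 := by
  have h0 : 0 ≤ ∑ j, hA.1.eigenvalues j :=
    Finset.sum_nonneg fun j _ => (hA.eigenvalues_pos j).le
  rw [re_trace_eq hA]; linarith

lemma mfun_pos {A : Mat n} (hA : A.PosDef) : 0 < mfun A := by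
  rw [mfun, re_det_eq hA]
  exact div_pos (Finset.prod_pos fun j _ => hA.eigenvalues_pos j)
    (pow_pos (trace_add_one_pos hA) _)

lemma mfun_le {A : Mat n} (hA : A.PosDef) (i : Fin n) : mfun A ≤ hA.1.eigenvalues i := by
  have hdet := re_det_eq hA
  have htr := re_trace_eq hA
  have hpos : ∀ j, 0 < hA.1.eigenvalues j := hA.eigenvalues_pos
  have htr1 : 0 < Complex.re A.trace + 1 := trace_add_one_pos hA
  rw [mfun, div_le_iff₀ (pow_pos htr1 _)]
  have hprod : ∏ j, hA.1.eigenvalues j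
      = hA.1.eigenvalues i * ∏ j ∈ Finset.univ.erase i, hA.1.eigenvalues j :=
    (Finset.mul_prod_erase Finset.univ _ (Finset.mem_univ i)).symm
  rw [hdet, hprod]
  refine mul_le_mul_of_nonneg_left ?_ (hpos i).le
  calc ∏ j ∈ Finset.univ.erase i, hA.1.eigenvalues j
      ≤ ∏ _j ∈ Finset.univ.erase i, (Complex.re A.trace + 1) := by
        refine Finset.prod_le_prod (fun j _ => (hpos j).le) fun j _ => ?_
        rw [htr]
        have := Finset.single_le_sum (f := fun j => hA.1.eigenvalues j)
          (fun k _ => (hpos k).le) (Finset.mem_univ j)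
        linarith
    _ = (Complex.re A.trace + 1) ^ (n - 1) := by
        rw [Finset.prod_const, Finset.card_erase_of_mem (Finset.mem_univ i),
          Finset.card_univ, Fintype.card_fin]

lemma measurable_mfun {α : Type*} [MeasurableSpace α] {W : α → Mat n}
    (h : ∀ i j, Measurable fun x => W x i j) : Measurable fun x => mfun (W x) := by
  have hdet : Measurable fun x => (W x).det := by
    simp_rw [Matrix.det_apply, Units.smul_def, zsmul_eq_mul]
    refine Finset.measurable_sum _ fun σ _ => ?_
    exact (measurable_const.mul (Finset.measurable_prod _ fun i _ => h (σ i) i))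
  have htr : Measurable fun x => (W x).trace := by
    simp_rw [Matrix.trace, Matrix.diag]
    exact Finset.measurable_sum _ fun i _ => h i i
  exact (Complex.measurable_re.comp hdet).div
    (((Complex.measurable_re.comp htr).add measurable_const).pow_const _)

/-! ### Operator norm facts -/

lemma mulVecE_eq (A : Mat n) (v : Cn n) : mulVecE A v = Matrix.toEuclideanLin A v :=
  (Matrix.toEuclideanLin_apply A v).symm

lemma mulVecE_zero (A : Mat n) : mulVecE A (0 : Cn n) = 0 := by
  simp [mulVecE_eq]

lemma mulVecE_mul (A B : Mat n) (v : Cn n) : mulVecE (A * B) v = mulVecE A (mulVecE B v) := by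
  simp [mulVecE, Matrix.mulVec_mulVec]

lemma mulVecE_one (v : Cn n) : mulVecE (1 : Mat n) v = v := by
  simp [mulVecE, Matrix.one_mulVec]

lemma ratio_le (A : Mat n) (v : Cn n) :
    ‖mulVecE A v‖ / ‖v‖ ≤ ‖LinearMap.toContinuousLinearMap (Matrix.toEuclideanLin A)‖ := by
  rcases eq_or_ne v 0 with h | h
  · rw [h, mulVecE_zero, norm_zero, zero_div]
    exact norm_nonneg _
  · rw [div_le_iff₀ (norm_pos_iff.mpr h)]
    rw [mulVecE_eq]
    exact (LinearMap.toContinuousLinearMap (Matrix.toEuclideanLin A)).le_opNorm v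

lemma opNorm_bdd (A : Mat n) : BddAbove (Set.range fun v : Cn n => ‖mulVecE A v‖ / ‖v‖) :=
  ⟨_, Set.forall_mem_range.mpr (ratio_le A)⟩

lemma norm_mulVecE_le (A : Mat n) (v : Cn n) : ‖mulVecE A v‖ ≤ opNorm A * ‖v‖ := by
  rcases eq_or_ne v 0 with h | h
  · rw [h, mulVecE_zero, norm_zero, mul_zero]
  · have h1 : ‖mulVecE A v‖ / ‖v‖ ≤ opNorm A := le_ciSup (opNorm_bdd A) v
    rw [div_le_iff₀ (norm_pos_iff.mpr h)] at h1
    linarith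

lemma opNorm_nonneg (A : Mat n) : 0 ≤ opNorm A := by
  have h := le_ciSup (opNorm_bdd A) (0 : Cn n)
  simp [mulVecE_zero] at h
  exact h

/-- A measurable-modulo-`V` lower bound for `‖V(y)^{-1/q} e‖`. -/
def gfun (q p : ℝ) (B : Mat n) : ℝ := ((opNorm (rpowMat B (1/q)) ^ p) ^ p⁻¹)⁻¹

lemma gfun_bound {p q : ℝ} (hp0 : 0 < p) {B : Mat n} (hB : B.PosDef) {e : Cn n}
    (he : ‖e‖ = 1) :
    0 < gfun q p B ∧ gfun q p B ≤ ‖mulVecE (rpowMat B (-(1/q))) e‖ := by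
  have hid : mulVecE (rpowMat B (1/q)) (mulVecE (rpowMat B (-(1/q))) e) = e := by
    rw [← mulVecE_mul, rpowMat_mul_rpowMat_neg hB (1/q), mulVecE_one]
  have hle1 : 1 ≤ opNorm (rpowMat B (1/q)) * ‖mulVecE (rpowMat B (-(1/q))) e‖ := by
    have h2 := norm_mulVecE_le (rpowMat B (1/q)) (mulVecE (rpowMat B (-(1/q))) e)
    rw [hid, he] at h2
    exact h2
  have hN0 : 0 ≤ opNorm (rpowMat B (1/q)) := opNorm_nonneg _
  have hNpos : 0 < opNorm (rpowMat B (1/q)) := by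
    rcases hN0.lt_or_eq with h | h
    · exact h
    · exfalso
      rw [← h, zero_mul] at hle1
      linarith
  have hgeq : gfun q p B = (opNorm (rpowMat B (1/q)))⁻¹ := by
    rw [gfun, ← Real.rpow_mul hN0, mul_inv_cancel₀ (ne_of_gt hp0), Real.rpow_one]
  constructor
  · rw [hgeq]
    exact inv_pos.mpr hNpos
  · rw [hgeq, ← one_div]
    rw [div_le_iff₀ hNpos]
    linarith [hle1]

lemma key {p q : ℝ} (hp0 : 0 < p) (hq0 : 0 < q) {A B : Mat n} (hA : A.PosDef)
    (hB : B.PosDef) {e : Cn n} (he : ‖e‖ = 1) :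
    mfun A ^ (1/q) * gfun q p B ≤ ‖mulVecE (rpowMat A (1/q) * rpowMat B (-(1/q))) e‖ := by
  rw [mulVecE_mul]
  have h1 := rpow_mulVecE_lower hA (by positivity : (0:ℝ) < 1/q) (mfun_pos hA).le
    (mfun_le hA) (mulVecE (rpowMat B (-(1/q))) e)
  have h2 := (gfun_bound (q := q) hp0 hB he).2
  calc mfun A ^ (1/q) * gfun q p B
      ≤ mfun A ^ (1/q) * ‖mulVecE (rpowMat B (-(1/q))) e‖ :=
        mul_le_mul_of_nonneg_left h2 (Real.rpow_nonneg (mfun_pos hA).le _)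
    _ ≤ ‖mulVecE (rpowMat A (1/q)) (mulVecE (rpowMat B (-(1/q))) e)‖ := h1

/-! ### Cube geometry -/

lemma carrier_eq (Q : Cube d) :
    Q.carrier = (MeasurableEquiv.toLp 2 (Fin d → ℝ)).symm ⁻¹'
      (Set.univ.pi fun i => Set.Ico (Q.center i - Q.side / 2) (Q.center i + Q.side / 2)) := by
  ext y
  simp only [Cube.carrier, Set.mem_setOf_eq, Set.mem_preimage, Set.mem_univ_pi, Set.mem_Ico]
  rfl

lemma carrier_measurable (Q : Cube d) : MeasurableSet Q.carrier := by
  rw [carrier_eq]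
  exact (MeasurableEquiv.toLp 2 (Fin d → ℝ)).symm.measurable
    (MeasurableSet.univ_pi fun i => measurableSet_Ico)

lemma cube_vol_eq (Q : Cube d) : Q.vol = (ENNReal.ofReal Q.side) ^ d := by
  rw [Cube.vol, carrier_eq,
    (EuclideanSpace.volume_preserving_symm_measurableEquiv_toLp (Fin d)).measure_preimage
      ((MeasurableSet.univ_pi fun i => measurableSet_Ico).nullMeasurableSet),
    volume_pi_pi]
  have : ∀ i : Fin d, volume (Set.Ico (Q.center i - Q.side / 2) (Q.center i + Q.side / 2))
      = ENNReal.ofReal Q.side := by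
    intro i
    rw [Real.volume_Ico]
    ring_nf
  rw [Finset.prod_congr rfl fun i _ => this i, Finset.prod_const, Finset.card_univ,
    Fintype.card_fin]

lemma dist_coord_le (x y : Rd d) (i : Fin d) : |x i - y i| ≤ dist x y := by
  rw [EuclideanSpace.dist_eq]
  have h1 : dist (x i) (y i) ^ 2 ≤ ∑ j, dist (x j) (y j) ^ 2 :=
    Finset.single_le_sum (f := fun j => dist (x j) (y j) ^ 2)
      (fun j _ => sq_nonneg _) (Finset.mem_univ i)
  have h2 := Real.sqrt_le_sqrt h1
  rwa [Real.sqrt_sq dist_nonneg, Real.dist_eq] at h2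

lemma closedBall_subset_carrier (Q : Cube d) {r : ℝ} (hr : r < Q.side / 2) :
    Metric.closedBall Q.center r ⊆ Q.carrier := by
  intro y hy
  rw [Metric.mem_closedBall] at hy
  intro i
  have h := dist_coord_le y Q.center i
  have := abs_le.mp (le_trans h hy)
  constructor <;> [linarith [this.1]; linarith [this.2]]

/-! ### misc -/

lemma rpow_ne_top {x : ℝ≥0∞} (h0 : x ≠ 0) (ht : x ≠ ⊤) (y : ℝ) : x ^ y ≠ ⊤ := by
  rcases le_or_gt 0 y with hy | hy
  · exact ENNReal.rpow_ne_top_of_nonneg hy ht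
  · rw [← neg_neg y, ENNReal.rpow_neg]
    rw [Ne, ENNReal.inv_eq_top]
    exact (ENNReal.rpow_pos (pos_iff_ne_zero.mpr h0) ht).ne'

end Aux
end AuxSection

/-- degeneracy when `1/p - 1/q > α/d`. -/
theorem statement_15 (d n : ℕ) (hd : 1 ≤ d) (θ α p q : ℝ)
    (hθ : 0 ≤ θ) (hα0 : 0 < α) (hαd : α < d)
    (hp1 : 1 < p) (hpq : p < q) (hgt : α/(d:ℝ) < 1/p - 1/q)
    (ρ : Rd d → ℝ) (hρ : IsCriticalRadius ρ)
    (U V : Rd d → Mat n) (hU : IsMatrixWeight U) (hV : IsMatrixWeight V)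
    (hVloc : LocallyIntegrable (fun x => opNorm (rpowMat (V x) (1/q)) ^ p) volume)
    (C : ℝ)
    (hbound : ∀ f : Rd d → Cn n, StronglyMeasurable f → vLp p f < ⊤ →
      eLq q (MfracPair ρ θ α q U V f) ≤ ENNReal.ofReal C * vLp p f) :
    ∀ᵐ x : Rd d, U x = 0 := by
  rcases Nat.eq_zero_or_pos n with hn0 | hn
  · subst hn0
    exact Filter.Eventually.of_forall fun x => Matrix.ext fun i _ => i.elim0
  exfalso
  -- numeric preliminaries
  have hd1 : (1:ℝ) ≤ d := by exact_mod_cast hd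
  have hd0 : (0:ℝ) < d := by linarith
  have hp0 : (0:ℝ) < p := by linarith
  have hq0 : (0:ℝ) < q := by linarith
  -- the unit vector
  set e : Cn n := EuclideanSpace.single (⟨0, hn⟩ : Fin n) (1:ℂ) with he_def
  have he : ‖e‖ = 1 := by
    rw [he_def, ← coe_nnnorm, EuclideanSpace.nnnorm_single]
    simp
  -- a.e. facts
  have haeU : ∀ᵐ x : Rd d, (U x).PosDef := hU.2.2
  have haeV : ∀ᵐ y : Rd d, (V y).PosDef := hV.2.2
  have haemfunpos : ∀ᵐ x : Rd d, 0 < Aux.mfun (U x) := by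
    filter_upwards [haeU] with x hx
    exact Aux.mfun_pos hx
  -- G and its measurable version
  set G : Rd d → ℝ≥0∞ := fun y => ENNReal.ofReal (Aux.gfun q p (V y)) with hG_def
  have hGae : AEMeasurable G volume := by
    have h1 : AEMeasurable (fun y => opNorm (rpowMat (V y) (1/q)) ^ p) volume :=
      hVloc.aestronglyMeasurable.aemeasurable
    exact ENNReal.measurable_ofReal.comp_aemeasurable
      (((Real.continuous_rpow_const (by positivity : (0:ℝ) ≤ p⁻¹)).measurable.comp_aemeasurable
        h1).inv)
  set G₀ : Rd d → ℝ≥0∞ := hGae.mk _ with hG0_def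
  have hG₀meas : Measurable G₀ := hGae.measurable_mk
  have hGG₀ : G =ᵐ[volume] G₀ := hGae.ae_eq_mk
  have haeG₀pos : ∀ᵐ y : Rd d, 0 < G₀ y := by
    filter_upwards [haeV, hGG₀] with y hy hyG
    rw [← hyG, hG_def]
    exact ENNReal.ofReal_pos.mpr (Aux.gfun_bound (q := q) hp0 hy he).1
  -- choose a set of positive measure where both bounds hold
  set Sf : ℝ → Set (Rd d) :=
    fun c => {x | c ≤ Aux.mfun (U x)} ∩ {x | ENNReal.ofReal c ≤ G₀ x} with hSf_def
  have hSfmeas : ∀ c, MeasurableSet (Sf c) := fun c =>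
    (measurableSet_le measurable_const (Aux.measurable_mfun hU.1)).inter
      (measurableSet_le measurable_const hG₀meas)
  have hexk : ∃ k : ℕ, 0 < volume (Sf (1/((k:ℝ)+1))) := by
    by_contra hcon
    push_neg at hcon
    have hmem : ∀ᵐ x : Rd d, x ∈ ⋃ k : ℕ, Sf (1/((k:ℝ)+1)) := by
      filter_upwards [haemfunpos, haeG₀pos] with x h1 h2
      rcases eq_or_ne (G₀ x) ⊤ with htop | htop
      · obtain ⟨k, hk⟩ := exists_nat_one_div_lt h1
        refine Set.mem_iUnion.mpr ⟨k, hk.le, ?_⟩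
        show ENNReal.ofReal (1/((k:ℝ)+1)) ≤ G₀ x
        rw [htop]
        exact le_top
      · obtain ⟨k, hk⟩ := exists_nat_one_div_lt (lt_min h1 (ENNReal.toReal_pos h2.ne' htop))
        refine Set.mem_iUnion.mpr ⟨k, (le_min_iff.mp hk.le).1, ?_⟩
        exact ENNReal.ofReal_le_of_le_toReal (le_min_iff.mp hk.le).2
    have h1 : volume (⋃ k : ℕ, Sf (1/((k:ℝ)+1))) = 0 :=
      measure_iUnion_null fun k => le_antisymm (hcon k) zero_le
    have h2 : volume (Set.univ \ ⋃ k : ℕ, Sf (1/((k:ℝ)+1))) = 0 :=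
      measure_mono_null (fun x hx => hx.2) (ae_iff.mp hmem)
    have h3 : (0:ℝ≥0∞) < volume (Set.univ : Set (Rd d)) :=
      isOpen_univ.measure_pos volume ⟨0, trivial⟩
    have h4 : volume (Set.univ : Set (Rd d)) ≤ 0 := by
      calc volume (Set.univ : Set (Rd d))
          = volume ((⋃ k : ℕ, Sf (1/((k:ℝ)+1))) ∪ (Set.univ \ ⋃ k : ℕ, Sf (1/((k:ℝ)+1)))) := by
            rw [Set.union_diff_cancel (Set.subset_univ _)]
        _ ≤ volume (⋃ k : ℕ, Sf (1/((k:ℝ)+1)))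
            + volume (Set.univ \ ⋃ k : ℕ, Sf (1/((k:ℝ)+1))) := measure_union_le _ _
        _ = 0 := by rw [h1, h2, add_zero]
    exact absurd (lt_of_lt_of_le h3 h4) (lt_irrefl 0)
  obtain ⟨k, hSpos⟩ := hexk
  set ε : ℝ := 1/((k:ℝ)+1) with hε_def
  have hε0 : 0 < ε := by rw [hε_def]; positivity
  set S : Set (Rd d) := Sf ε with hS_def
  have hSmeas : MeasurableSet S := hSfmeas ε
  -- density point
  have hdens := Besicovitch.ae_tendsto_measure_inter_div_of_measurableSet volume hSmeas
  have hex : ∃ x₀, x₀ ∈ S ∧ Filter.Tendsto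
      (fun r => volume (S ∩ Metric.closedBall x₀ r) / volume (Metric.closedBall x₀ r))
      (nhdsWithin 0 (Set.Ioi 0)) (nhds 1) := by
    by_contra hcon
    push_neg at hcon
    have hsub : S ⊆ {x | ¬ Filter.Tendsto
        (fun r => volume (S ∩ Metric.closedBall x r) / volume (Metric.closedBall x r))
        (nhdsWithin 0 (Set.Ioi 0)) (nhds (S.indicator 1 x))} := by
      intro x hxS hT
      rw [Set.indicator_of_mem hxS, Pi.one_apply] at hT
      exact hcon x hxS hT
    exact absurd (measure_mono_null hsub (ae_iff.mp hdens)) (ne_of_gt hSpos)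
  obtain ⟨x₀, hx₀S, htend⟩ := hex
  -- constants
  have hρ0 : 0 < ρ x₀ := hρ.2.1 x₀
  set Cψ : ℝ := (1 + 1/ρ x₀) ^ θ with hCψ_def
  have hCψpos : 0 < Cψ := Real.rpow_pos_of_pos (by positivity) θ
  set κ : ℝ≥0∞ := volume (Metric.ball (0 : Rd d) 1) with hκ_def
  have hκ0 : 0 < κ := Metric.measure_ball_pos volume 0 one_pos
  have hκtop : κ < ⊤ := measure_ball_lt_top
  set c4 : ℝ≥0∞ := 2⁻¹ * κ * (ENNReal.ofReal 4⁻¹) ^ d with hc4_def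
  have hc4_0 : c4 ≠ 0 := by
    refine mul_ne_zero (mul_ne_zero ?_ hκ0.ne') ?_
    · simp
    · refine pow_ne_zero _ ?_
      rw [Ne, ENNReal.ofReal_eq_zero]
      norm_num
  have hc4_top : c4 ≠ ⊤ := by
    refine ENNReal.mul_ne_top (ENNReal.mul_ne_top ?_ hκtop.ne) ?_
    · simp
    · exact ENNReal.pow_ne_top ENNReal.ofReal_ne_top
  set c1 : ℝ≥0∞ := (ENNReal.ofReal Cψ) ^ (α/(d:ℝ) - 1) * ENNReal.ofReal (ε ^ (1/q))
    * ENNReal.ofReal ε * c4 * c4 ^ (1/q) with hc1_def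
  have hCψ0' : ENNReal.ofReal Cψ ≠ 0 := (ENNReal.ofReal_pos.mpr hCψpos).ne'
  have hc1_0 : c1 ≠ 0 := by
    rw [hc1_def]
    refine mul_ne_zero (mul_ne_zero (mul_ne_zero (mul_ne_zero ?_ ?_) ?_) hc4_0) ?_
    · exact (ENNReal.rpow_pos (ENNReal.ofReal_pos.mpr hCψpos) ENNReal.ofReal_ne_top).ne'
    · exact (ENNReal.ofReal_pos.mpr (Real.rpow_pos_of_pos hε0 _)).ne'
    · exact (ENNReal.ofReal_pos.mpr hε0).ne'
    · exact (ENNReal.rpow_pos (pos_iff_ne_zero.mpr hc4_0) hc4_top).ne'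
  have hc1_top : c1 ≠ ⊤ := by
    rw [hc1_def]
    refine ENNReal.mul_ne_top (ENNReal.mul_ne_top (ENNReal.mul_ne_top (ENNReal.mul_ne_top
      ?_ ENNReal.ofReal_ne_top) ENNReal.ofReal_ne_top) hc4_top) ?_
    · exact Aux.rpow_ne_top hCψ0' ENNReal.ofReal_ne_top _
    · exact Aux.rpow_ne_top hc4_0 hc4_top _
  -- the exponent gap
  set δ : ℝ := (d:ℝ)*(1/p) - α - (d:ℝ)*(1/q) with hδ_def
  have hδ0 : 0 < δ := by
    have h1 : α < (1/p - 1/q) * (d:ℝ) := (div_lt_iff₀ hd0).mp hgt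
    have h2 : (1/p - 1/q) * (d:ℝ) = (d:ℝ)*(1/p) - (d:ℝ)*(1/q) := by ring
    rw [hδ_def]
    linarith
  -- eventual statements
  have hev1 : ∀ᶠ s in nhdsWithin (0:ℝ) (Set.Ioi 0), 0 < s ∧ s ≤ 1 := by
    filter_upwards [Ioo_mem_nhdsGT_of_mem
      (show (0:ℝ) ∈ Set.Ico (0:ℝ) 1 from ⟨le_refl 0, one_pos⟩)] with s hs
    exact ⟨hs.1, hs.2.le⟩
  have hev2 : ∀ᶠ s in nhdsWithin (0:ℝ) (Set.Ioi 0),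
      2⁻¹ * volume (Metric.closedBall x₀ (s/4)) ≤ volume (S ∩ Metric.closedBall x₀ (s/4)) := by
    have hhalf : (2⁻¹ : ℝ≥0∞) < 1 := by
      rw [ENNReal.inv_lt_one]
      exact one_lt_two
    have hball : ∀ᶠ r in nhdsWithin (0:ℝ) (Set.Ioi 0),
        2⁻¹ * volume (Metric.closedBall x₀ r) ≤ volume (S ∩ Metric.closedBall x₀ r) := by
      filter_upwards [htend.eventually (eventually_gt_nhds hhalf), self_mem_nhdsWithin]
        with r hr hrpos
      have hr0 : (0:ℝ) < r := hrpos
      have hb0 : volume (Metric.closedBall x₀ r) ≠ 0 := (Metric.measure_closedBall_pos volume x₀ hr0).ne'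
      have hbt : volume (Metric.closedBall x₀ r) ≠ ⊤ := measure_closedBall_lt_top.ne
      exact le_of_lt ((ENNReal.lt_div_iff_mul_lt (Or.inl hb0) (Or.inl hbt)).mp hr)
    have hmap : Filter.Tendsto (fun s : ℝ => s/4) (nhdsWithin (0:ℝ) (Set.Ioi 0))
        (nhdsWithin (0:ℝ) (Set.Ioi 0)) := by
      refine tendsto_nhdsWithin_iff.mpr ⟨?_, ?_⟩
      · have h1 : Filter.Tendsto (fun s:ℝ => s/4) (nhds (0:ℝ)) (nhds ((0:ℝ)/4)) :=
          (continuous_id.div_const 4).tendsto 0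
        rw [zero_div] at h1
        exact h1.mono_left nhdsWithin_le_nhds
      · filter_upwards [self_mem_nhdsWithin] with s hs
        have hs0 : (0:ℝ) < s := hs
        exact Set.mem_Ioi.mpr (by positivity)
    exact hmap.eventually hball
  have hev3 : ∀ᶠ s in nhdsWithin (0:ℝ) (Set.Ioi 0),
      ENNReal.ofReal C * (ENNReal.ofReal s) ^ δ < c1 := by
    rcases eq_or_ne (ENNReal.ofReal C) 0 with hC0 | hC0
    · refine Filter.Eventually.of_forall fun s => ?_
      rw [hC0, zero_mul]
      exact pos_iff_ne_zero.mpr hc1_0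
    · have hCpos : 0 < C := by
        by_contra hcc
        push_neg at hcc
        exact hC0 (ENNReal.ofReal_eq_zero.mpr hcc)
      have hTpos : 0 < c1.toReal := ENNReal.toReal_pos hc1_0 hc1_top
      have hb0pos : 0 < c1.toReal / (C + 1) := div_pos hTpos (by linarith)
      have ht0pos : 0 < (c1.toReal / (C + 1)) ^ δ⁻¹ := Real.rpow_pos_of_pos hb0pos _
      filter_upwards [Ioo_mem_nhdsGT_of_mem
        (show (0:ℝ) ∈ Set.Ico (0:ℝ) ((c1.toReal / (C + 1)) ^ δ⁻¹) from ⟨le_refl 0, ht0pos⟩)]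
        with s hs
      obtain ⟨hs0, hst⟩ := hs
      have h1 : s ^ δ < c1.toReal / (C + 1) := by
        have h2 : s ^ δ < ((c1.toReal / (C + 1)) ^ δ⁻¹) ^ δ :=
          Real.rpow_lt_rpow hs0.le hst hδ0
        rwa [← Real.rpow_mul hb0pos.le, inv_mul_cancel₀ hδ0.ne', Real.rpow_one] at h2
      have h3 : C * s ^ δ < c1.toReal := by
        calc C * s ^ δ < C * (c1.toReal / (C + 1)) := by
              exact mul_lt_mul_of_pos_left h1 hCpos
          _ = c1.toReal * (C / (C+1)) := by ring
          _ < c1.toReal * 1 := by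
              refine mul_lt_mul_of_pos_left ?_ hTpos
              rw [div_lt_one (by linarith)]
              linarith
          _ = c1.toReal := mul_one _
      calc ENNReal.ofReal C * (ENNReal.ofReal s) ^ δ
          = ENNReal.ofReal (C * s ^ δ) := by
            rw [ENNReal.ofReal_rpow_of_pos hs0, ← ENNReal.ofReal_mul hCpos.le]
        _ < ENNReal.ofReal c1.toReal := by
            rw [ENNReal.ofReal_lt_ofReal_iff hTpos]
            exact h3
        _ = c1 := ENNReal.ofReal_toReal hc1_top
  obtain ⟨s, ⟨hs0, hs1⟩, hsdens, hsnum⟩ := (hev1.and (hev2.and hev3)).exists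
  -- the test cube and test function
  set a : ℝ≥0∞ := ENNReal.ofReal s with ha_def
  have ha0 : a ≠ 0 := by
    rw [ha_def, Ne, ENNReal.ofReal_eq_zero]
    linarith
  have hatop : a ≠ ⊤ := ENNReal.ofReal_ne_top
  set Qs : Cube d := ⟨x₀, s, hs0⟩ with hQs_def
  have hQcar : MeasurableSet Qs.carrier := Aux.carrier_measurable Qs
  have hQvol : Qs.vol = a ^ d := Aux.cube_vol_eq Qs
  set f : Rd d → Cn n := Qs.carrier.indicator (fun _ => e) with hf_def
  have hsm : StronglyMeasurable f := stronglyMeasurable_const.indicator hQcar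
  have hvLp : vLp p f = (a ^ d) ^ (1/p) := by
    rw [vLp]
    have hpt : (fun x => ENNReal.ofReal (‖f x‖ ^ p)) = Qs.carrier.indicator (fun _ => 1) := by
      funext x
      by_cases hx : x ∈ Qs.carrier
      · rw [hf_def]
        simp only [Set.indicator_of_mem hx, he, Real.one_rpow, ENNReal.ofReal_one]
      · rw [hf_def]
        simp only [Set.indicator_of_notMem hx, norm_zero,
          Real.zero_rpow (ne_of_gt hp0), ENNReal.ofReal_zero]
    rw [hpt, lintegral_indicator hQcar, setLIntegral_one]
    rw [show volume Qs.carrier = Qs.vol from rfl, hQvol]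
  have hffin : vLp p f < ⊤ := by
    rw [hvLp]
    exact ENNReal.rpow_lt_top_of_nonneg (by positivity) (ENNReal.pow_ne_top hatop)
  have hmain0 := hbound f hsm hffin
  -- the main lower bound
  set B : ℝ≥0∞ := volume (Qs.carrier ∩ S) with hB_def
  set W : ℝ≥0∞ := (wvol (psi θ ρ) Qs) ^ (α/(d:ℝ) - 1) with hW_def
  set K : ℝ≥0∞ := W * (ENNReal.ofReal (ε ^ (1/q)) * (ENNReal.ofReal ε * B)) with hK_def
  have claim1 : ∀ᵐ x : Rd d, x ∈ Qs.carrier ∩ S → K ≤ MfracPair ρ θ α q U V f x := by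
    filter_upwards [haeU] with x hxU hxmem
    obtain ⟨hxQ, hxS⟩ := hxmem
    have hstep : K ≤ (wvol (psi θ ρ) Qs) ^ (α/(d:ℝ) - 1) *
        ∫⁻ y in Qs.carrier, ENNReal.ofReal ‖mulVecE (UV q U V x y) (f y)‖ := by
      rw [hK_def, hW_def]
      refine mul_le_mul_right ?_ _
      have hint1 : ∫⁻ y in Qs.carrier, ENNReal.ofReal ‖mulVecE (UV q U V x y) (f y)‖
          = ∫⁻ y in Qs.carrier, ENNReal.ofReal ‖mulVecE (UV q U V x y) e‖ := by
        refine setLIntegral_congr_fun hQcar (fun y hy => ?_)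
        rw [hf_def, Set.indicator_of_mem hy]
      rw [hint1]
      have hmf0 : 0 ≤ Aux.mfun (U x) := (Aux.mfun_pos hxU).le
      calc ENNReal.ofReal (ε ^ (1/q)) * (ENNReal.ofReal ε * B)
          ≤ ENNReal.ofReal (Aux.mfun (U x) ^ (1/q)) * (∫⁻ y in Qs.carrier, G y) := by
            refine mul_le_mul' (ENNReal.ofReal_le_ofReal
              (Real.rpow_le_rpow hε0.le hxS.1 (by positivity))) ?_
            calc ENNReal.ofReal ε * B
                = ∫⁻ _y in Qs.carrier ∩ S, ENNReal.ofReal ε := by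
                  rw [setLIntegral_const, hB_def]
              _ ≤ ∫⁻ y in Qs.carrier ∩ S, G₀ y :=
                  setLIntegral_mono hG₀meas fun y hy => hy.2.2
              _ ≤ ∫⁻ y in Qs.carrier, G₀ y := lintegral_mono_set Set.inter_subset_left
              _ = ∫⁻ y in Qs.carrier, G y :=
                  lintegral_congr_ae (ae_restrict_of_ae hGG₀.symm)
        _ = ∫⁻ y in Qs.carrier, ENNReal.ofReal (Aux.mfun (U x) ^ (1/q)) * G y :=
            (lintegral_const_mul' _ _ ENNReal.ofReal_ne_top).symm
        _ ≤ ∫⁻ y in Qs.carrier, ENNReal.ofReal ‖mulVecE (UV q U V x y) e‖ := by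
            refine lintegral_mono_ae ?_
            filter_upwards [ae_restrict_of_ae haeV] with y hyV
            rw [hG_def, ← ENNReal.ofReal_mul (Real.rpow_nonneg hmf0 _)]
            exact ENNReal.ofReal_le_ofReal (Aux.key hp0 hq0 hxU hyV he)
    refine le_trans hstep ?_
    exact le_iSup (fun (Q : {Q : Cube d // x ∈ Q.carrier}) =>
      (wvol (psi θ ρ) Q.1) ^ (α/(d:ℝ) - 1) *
        ∫⁻ y in Q.1.carrier, ENNReal.ofReal ‖mulVecE (UV q U V x y) (f y)‖) ⟨Qs, hxQ⟩
  have claim2 : K * B ^ (1/q) ≤ eLq q (MfracPair ρ θ α q U V f) := by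
    have hBmeas : MeasurableSet (Qs.carrier ∩ S) := hQcar.inter hSmeas
    have hpt : ∀ᵐ x : Rd d, (Qs.carrier ∩ S).indicator (fun _ => K ^ q) x
        ≤ (MfracPair ρ θ α q U V f x) ^ q := by
      filter_upwards [claim1] with x hx
      by_cases hmem : x ∈ Qs.carrier ∩ S
      · rw [Set.indicator_of_mem hmem]
        exact ENNReal.rpow_le_rpow (hx hmem) hq0.le
      · rw [Set.indicator_of_notMem hmem]
        exact zero_le
    have hint : ∫⁻ x, (Qs.carrier ∩ S).indicator (fun _ => K ^ q) x
        ≤ ∫⁻ x, (MfracPair ρ θ α q U V f x) ^ q := lintegral_mono_ae hpt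
    rw [lintegral_indicator hBmeas, setLIntegral_const] at hint
    have h2 : (K ^ q * B) ^ (1/q) ≤ eLq q (MfracPair ρ θ α q U V f) :=
      ENNReal.rpow_le_rpow hint (by positivity)
    rwa [ENNReal.mul_rpow_of_nonneg _ _ (by positivity), ← ENNReal.rpow_mul,
      mul_one_div_cancel hq0.ne', ENNReal.rpow_one] at h2
  -- upper bound for W and lower bound for B
  have hψle : psi θ ρ Qs ≤ Cψ := by
    rw [psi, hCψ_def]
    have hbase : (0:ℝ) ≤ 1 + s / ρ x₀ := by
      have := div_pos hs0 hρ0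
      linarith
    refine Real.rpow_le_rpow hbase ?_ hθ
    have h5 : s / ρ x₀ ≤ 1 / ρ x₀ := by
      rw [div_eq_mul_inv, div_eq_mul_inv]
      exact mul_le_mul_of_nonneg_right hs1 (inv_nonneg.mpr hρ0.le)
    show (1:ℝ) + s / ρ x₀ ≤ 1 + 1 / ρ x₀
    linarith
  have hwvol_le : wvol (psi θ ρ) Qs ≤ ENNReal.ofReal Cψ * a ^ d := by
    rw [wvol, hQvol]
    exact mul_le_mul_left (ENNReal.ofReal_le_ofReal hψle) _
  have hWlow : (ENNReal.ofReal Cψ * a ^ d) ^ (α/(d:ℝ) - 1) ≤ W := by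
    rw [hW_def]
    have hexp : α/(d:ℝ) - 1 = -(1 - α/(d:ℝ)) := by ring
    rw [hexp, ENNReal.rpow_neg, ENNReal.rpow_neg]
    refine ENNReal.inv_le_inv.mpr ?_
    refine ENNReal.rpow_le_rpow hwvol_le ?_
    have : α/(d:ℝ) < 1 := by
      rw [div_lt_one hd0]
      exact hαd
    linarith
  have hBlow : c4 * a ^ d ≤ B := by
    have hsub : Metric.closedBall x₀ (s/4) ⊆ Qs.carrier := by
      refine Aux.closedBall_subset_carrier Qs ?_
      show s/4 < s/2
      linarith
    calc c4 * a ^ d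
        = 2⁻¹ * (ENNReal.ofReal ((s/4) ^ d) * κ) := by
          rw [hc4_def, ha_def, show s/4 = s * 4⁻¹ by ring,
            ENNReal.ofReal_pow (by positivity), ENNReal.ofReal_mul hs0.le, mul_pow]
          ring
      _ = 2⁻¹ * volume (Metric.closedBall x₀ (s/4)) := by
          rw [Measure.addHaar_closedBall volume x₀ (by positivity : (0:ℝ) ≤ s/4),
            finrank_euclideanSpace_fin, hκ_def]
      _ ≤ volume (S ∩ Metric.closedBall x₀ (s/4)) := hsdens
      _ ≤ B := by
          rw [hB_def]
          refine measure_mono ?_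
          intro z hz
          exact ⟨hsub hz.2, hz.1⟩
  -- assemble
  have hchain : c1 * a ^ (α + (d:ℝ)*(1/q)) ≤ ENNReal.ofReal C * a ^ ((d:ℝ)*(1/p)) := by
    have e1 : (ENNReal.ofReal Cψ * a ^ d) ^ (α/(d:ℝ) - 1)
        = (ENNReal.ofReal Cψ) ^ (α/(d:ℝ) - 1) * a ^ (α - (d:ℝ)) := by
      rw [ENNReal.mul_rpow_of_ne_top ENNReal.ofReal_ne_top (ENNReal.pow_ne_top hatop)]
      congr 1
      rw [← ENNReal.rpow_natCast a d, ← ENNReal.rpow_mul]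
      congr 1
      field_simp
    have e2 : (c4 * a ^ d) ^ (1/q) = c4 ^ (1/q) * a ^ ((d:ℝ)*(1/q)) := by
      rw [ENNReal.mul_rpow_of_ne_top hc4_top (ENNReal.pow_ne_top hatop),
        ← ENNReal.rpow_natCast a d, ← ENNReal.rpow_mul]
    have e3 : a ^ (α + (d:ℝ)*(1/q)) = a ^ (α - (d:ℝ)) * a ^ ((d:ℝ)) * a ^ ((d:ℝ)*(1/q)) := by
      rw [← ENNReal.rpow_add _ _ ha0 hatop, ← ENNReal.rpow_add _ _ ha0 hatop]
      congr 1
      ring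
    have hL : c1 * a ^ (α + (d:ℝ)*(1/q))
        ≤ K * B ^ (1/q) := by
      calc c1 * a ^ (α + (d:ℝ)*(1/q))
          = (ENNReal.ofReal Cψ * a ^ d) ^ (α/(d:ℝ) - 1) *
            (ENNReal.ofReal (ε ^ (1/q)) * (ENNReal.ofReal ε * (c4 * a ^ d))) *
            ((c4 * a ^ d) ^ (1/q)) := by
            rw [hc1_def, e1, e2, e3, ← ENNReal.rpow_natCast a d]
            ring
        _ ≤ W * (ENNReal.ofReal (ε ^ (1/q)) * (ENNReal.ofReal ε * B)) * B ^ (1/q) := by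
            refine mul_le_mul' (mul_le_mul' hWlow ?_)
              (ENNReal.rpow_le_rpow hBlow (by positivity))
            exact mul_le_mul_right (mul_le_mul_right hBlow _) _
        _ = K * B ^ (1/q) := by rw [hK_def]
    have hR : eLq q (MfracPair ρ θ α q U V f) ≤ ENNReal.ofReal C * a ^ ((d:ℝ)*(1/p)) := by
      calc eLq q (MfracPair ρ θ α q U V f) ≤ ENNReal.ofReal C * vLp p f := hmain0
        _ = ENNReal.ofReal C * a ^ ((d:ℝ)*(1/p)) := by
            rw [hvLp, ← ENNReal.rpow_natCast a d, ← ENNReal.rpow_mul]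
    exact le_trans (le_trans hL claim2) hR
  have hsplit : a ^ ((d:ℝ)*(1/p)) = a ^ (α + (d:ℝ)*(1/q)) * a ^ δ := by
    rw [← ENNReal.rpow_add _ _ ha0 hatop]
    congr 1
    rw [hδ_def]
    ring
  rw [hsplit] at hchain
  have hE1pos : a ^ (α + (d:ℝ)*(1/q)) ≠ 0 :=
    (ENNReal.rpow_pos (pos_iff_ne_zero.mpr ha0) hatop).ne'
  have hE1top : a ^ (α + (d:ℝ)*(1/q)) ≠ ⊤ := Aux.rpow_ne_top ha0 hatop _
  have hfin : c1 ≤ ENNReal.ofReal C * a ^ δ := by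
    have h1 : c1 * a ^ (α + (d:ℝ)*(1/q))
        ≤ (ENNReal.ofReal C * a ^ δ) * a ^ (α + (d:ℝ)*(1/q)) := by
      calc c1 * a ^ (α + (d:ℝ)*(1/q))
          ≤ ENNReal.ofReal C * (a ^ (α + (d:ℝ)*(1/q)) * a ^ δ) := hchain
        _ = (ENNReal.ofReal C * a ^ δ) * a ^ (α + (d:ℝ)*(1/q)) := by ring
    exact (ENNReal.mul_le_mul_iff_left hE1pos hE1top).mp h1
  exact absurd hfin (not_le.mpr hsnum)
end
end
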